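/- arXiv:1801.00770 — 5 statements merged into one kernel-verified Lean document; each statement's English description precedes it below -/
import Mathlib

section
/- Let (Ω, Σ, μ) be a finite measure space, let F₁, F₂, … : Ω → {0,1} be measurable, and let 0 < ρ < 1. Suppose that for every j, the conditional probability that F_j = 1 given F₁,…,F_{j−1} is at least ρ. Then for every ℓ ∈ ℕ and every integer r ≥ 0, μ({ω : Σ_{i=1}^ℓ F_i(ω) ≤ r}) ≤ (Σ_{m=0}^{min(r,ℓ)} (ℓ choose m) ρ^m (1−ρ)^{ℓ−m}) μ(Ω); that is, Σ_{i=1}^ℓ F_i stochastically dominates a Binomial(ℓ, ρ) random variable. -/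
open MeasureTheory ENNReal

universe u

/-- The conditional probability that `F j = 1` given any outcome of `F 0, …, F (j-1)`
is at least `ρ`. -/
def CondGE {Ω : Type u} [MeasurableSpace Ω] (μ : Measure Ω) (F : ℕ → Ω → Bool)
    (ρ : ℝ) : Prop :=
  ∀ (j : ℕ) (a : Fin j → Bool),
    ENNReal.ofReal ρ * μ (⋂ i : Fin j, {ω | F i ω = a i}) ≤
      μ ({ω | F j ω = true} ∩ ⋂ i : Fin j, {ω | F i ω = a i})

namespace Stmt5Aux

variable {Ω : Type u} [MeasurableSpace Ω]

/-- The partial sum `Σ_{i<ℓ} F_i`. -/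
def Ssum (F : ℕ → Ω → Bool) (ℓ : ℕ) (ω : Ω) : ℕ :=
  ∑ i ∈ Finset.range ℓ, (if F i ω = true then 1 else 0)

/-- The atom of the σ-algebra generated by `F 0, …, F (j-1)` given by outcome `a`. -/
def Atom (F : ℕ → Ω → Bool) (j : ℕ) (a : Fin j → Bool) : Set Ω :=
  ⋂ i : Fin j, {ω | F i ω = a i}

/-- Number of `true`s in a vector of outcomes. -/
def cnt (j : ℕ) (a : Fin j → Bool) : ℕ := ∑ i : Fin j, (if a i = true then 1 else 0)

/-- The binomial CDF (without the `min` truncation). -/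
def Bfun (ρ : ℝ) (ℓ r : ℕ) : ℝ :=
  ∑ m ∈ Finset.range (r + 1), (ℓ.choose m : ℝ) * ρ ^ m * (1 - ρ) ^ (ℓ - m)

lemma Bfun_eq_min (ρ : ℝ) (ℓ r : ℕ) :
    Bfun ρ ℓ r = ∑ m ∈ Finset.range (min r ℓ + 1),
      (ℓ.choose m : ℝ) * ρ ^ m * (1 - ρ) ^ (ℓ - m) := by
  unfold Bfun
  refine (Finset.sum_subset (Finset.range_subset_range.2 ?_) ?_).symm
  · omega
  · intro m hm hm'
    simp only [Finset.mem_range] at hm hm'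
    have : ℓ < m := by omega
    simp [Nat.choose_eq_zero_of_lt this]

lemma Bfun_nonneg {ρ : ℝ} (hρ0 : 0 ≤ ρ) (hρ1 : ρ ≤ 1) (ℓ r : ℕ) : 0 ≤ Bfun ρ ℓ r := by
  apply Finset.sum_nonneg
  intro m _
  have h1 : (0:ℝ) ≤ 1 - ρ := by linarith
  positivity

lemma Bfun_base (ρ : ℝ) (r : ℕ) : Bfun ρ 0 r = 1 := by
  unfold Bfun
  rw [Finset.sum_eq_single_of_mem 0 (by simp)]
  · simp
  · intro m _ hm
    have : 0 < m := Nat.pos_of_ne_zero hm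
    simp [Nat.choose_eq_zero_of_lt this]

lemma Bfun_zero (ρ : ℝ) (ℓ : ℕ) : Bfun ρ ℓ 0 = (1 - ρ) ^ ℓ := by
  simp [Bfun]

lemma Bfun_rec (ρ : ℝ) (ℓ s : ℕ) :
    Bfun ρ (ℓ + 1) (s + 1) = ρ * Bfun ρ ℓ s + (1 - ρ) * Bfun ρ ℓ (s + 1) := by
  unfold Bfun
  rw [Finset.mul_sum, Finset.mul_sum]
  rw [Finset.sum_range_succ' (fun m => ((ℓ+1).choose m : ℝ) * ρ ^ m * (1 - ρ) ^ (ℓ + 1 - m))]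
  rw [Finset.sum_range_succ'
    (fun m => (1 - ρ) * (((ℓ).choose m : ℝ) * ρ ^ m * (1 - ρ) ^ (ℓ - m)))]
  have hconst : (((ℓ+1).choose 0 : ℝ) * ρ ^ 0 * (1 - ρ) ^ (ℓ + 1 - 0))
      = (1 - ρ) * (((ℓ).choose 0 : ℝ) * ρ ^ 0 * (1 - ρ) ^ (ℓ - 0)) := by
    simp [pow_succ]; ring
  have hsum : ∑ m ∈ Finset.range (s + 1),
      ((ℓ+1).choose (m+1) : ℝ) * ρ ^ (m+1) * (1 - ρ) ^ (ℓ + 1 - (m+1))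
      = ∑ m ∈ Finset.range (s + 1),
        (ρ * ((ℓ.choose m : ℝ) * ρ ^ m * (1 - ρ) ^ (ℓ - m))
          + (1 - ρ) * ((ℓ.choose (m+1) : ℝ) * ρ ^ (m+1) * (1 - ρ) ^ (ℓ - (m+1)))) := by
    apply Finset.sum_congr rfl
    intro m _
    have hpascal : ((ℓ+1).choose (m+1) : ℝ) = (ℓ.choose m : ℝ) + (ℓ.choose (m+1) : ℝ) := by
      rw [← Nat.cast_add, Nat.choose_succ_succ]
    have he1 : ℓ + 1 - (m + 1) = ℓ - m := by omega
    rcases lt_or_ge m ℓ with hm | hm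
    · have he2 : ℓ - (m + 1) + 1 = ℓ - m := by omega
      rw [hpascal, he1, ← he2, pow_succ]
      ring
    · have h0 : ℓ.choose (m+1) = 0 := Nat.choose_eq_zero_of_lt (by omega)
      rw [hpascal, he1, h0]
      simp [pow_succ]; ring
  rw [hconst, hsum, Finset.sum_add_distrib]
  ring

variable (F : ℕ → Ω → Bool)

lemma measurable_Ssum (hF : ∀ i, Measurable (F i)) (ℓ : ℕ) : Measurable (Ssum F ℓ) := by
  unfold Ssum
  apply Finset.measurable_sum
  intro i _
  exact Measurable.ite (hF i (measurableSet_singleton true)) measurable_const measurable_const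

lemma measurableSet_Ssum_le (hF : ∀ i, Measurable (F i)) (ℓ r : ℕ) :
    MeasurableSet {ω | Ssum F ℓ ω ≤ r} :=
  measurable_Ssum F hF ℓ ((Set.to_countable {n : ℕ | n ≤ r}).measurableSet)

lemma measurableSet_Ssum_eq (hF : ∀ i, Measurable (F i)) (ℓ r : ℕ) :
    MeasurableSet {ω | Ssum F ℓ ω = r} :=
  measurable_Ssum F hF ℓ ((Set.to_countable {n : ℕ | n = r}).measurableSet)

lemma measurableSet_Ssum_lt (hF : ∀ i, Measurable (F i)) (ℓ r : ℕ) :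
    MeasurableSet {ω | Ssum F ℓ ω < r} :=
  measurable_Ssum F hF ℓ ((Set.to_countable {n : ℕ | n < r}).measurableSet)

lemma measurableSet_atom (hF : ∀ i, Measurable (F i)) (j : ℕ) (a : Fin j → Bool) :
    MeasurableSet (Atom F j a) :=
  MeasurableSet.iInter fun i => hF i (measurableSet_singleton (a i))

lemma atom_disjoint (j : ℕ) {a b : Fin j → Bool} (hab : a ≠ b) :
    Disjoint (Atom F j a) (Atom F j b) := by
  obtain ⟨i, hi⟩ := Function.ne_iff.1 hab
  apply Set.disjoint_left.2
  intro ω hωa hωb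
  have h1 : F i ω = a i := Set.mem_iInter.1 hωa i
  have h2 : F i ω = b i := Set.mem_iInter.1 hωb i
  exact hi (h1 ▸ h2)

lemma Ssum_eq_cnt (j : ℕ) (a : Fin j → Bool) {ω : Ω} (hω : ω ∈ Atom F j a) :
    Ssum F j ω = cnt j a := by
  unfold Ssum cnt
  rw [← Fin.sum_univ_eq_sum_range (fun i => if F i ω = true then 1 else 0)]
  apply Finset.sum_congr rfl
  intro i _
  have : F i ω = a i := Set.mem_iInter.1 hω i
  rw [this]

lemma setOf_Ssum_eq (j r : ℕ) :
    {ω | Ssum F j ω = r} =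
      ⋃ a ∈ Finset.univ.filter (fun a : Fin j → Bool => cnt j a = r), Atom F j a := by
  ext ω
  simp only [Set.mem_setOf_eq, Set.mem_iUnion, Finset.mem_filter, Finset.mem_univ, true_and]
  constructor
  · intro h
    refine ⟨fun i => F i ω, ?_, ?_⟩
    · rw [← h]
      exact (Ssum_eq_cnt F j _ (Set.mem_iInter.2 fun i => rfl)).symm
    · exact Set.mem_iInter.2 fun i => rfl
  · rintro ⟨a, ha, hω⟩
    rw [Ssum_eq_cnt F j a hω, ha]

/-- Per-atom bound: conditioned on any atom, `F j = false` has probability at most `1-ρ`. -/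
lemma atom_false (μ : Measure Ω) [IsFiniteMeasure μ] (hF : ∀ i, Measurable (F i))
    {ρ : ℝ} (hρ0 : 0 ≤ ρ) (hcond : CondGE μ F ρ) (j : ℕ) (a : Fin j → Bool) :
    (μ ({ω | F j ω = false} ∩ Atom F j a)).toReal ≤
      (1 - ρ) * (μ (Atom F j a)).toReal := by
  set A := Atom F j a with hA
  have htm : MeasurableSet {ω | F j ω = true} := hF j (measurableSet_singleton true)
  have hAm : MeasurableSet A := measurableSet_atom F hF j a
  have hfm : MeasurableSet ({ω | F j ω = false} ∩ A) :=
    (hF j (measurableSet_singleton false)).inter hAm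
  have hdisj : Disjoint ({ω | F j ω = true} ∩ A) ({ω | F j ω = false} ∩ A) :=
    Set.disjoint_left.2 (by rintro ω ⟨h1, -⟩ ⟨h2, -⟩; simp_all)
  have hun : ({ω | F j ω = true} ∩ A) ∪ ({ω | F j ω = false} ∩ A) = A := by
    ext ω
    rcases Bool.eq_false_or_eq_true (F j ω) with h | h <;>
      simp [Set.mem_union, Set.mem_inter_iff, Set.mem_setOf_eq, h]
  have hsplit : μ A = μ ({ω | F j ω = true} ∩ A) + μ ({ω | F j ω = false} ∩ A) := by
    rw [← measure_union hdisj hfm, hun]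
  have hz : (μ A).toReal
      = (μ ({ω | F j ω = true} ∩ A)).toReal + (μ ({ω | F j ω = false} ∩ A)).toReal := by
    rw [hsplit, ENNReal.toReal_add (measure_ne_top μ _) (measure_ne_top μ _)]
  have hx : ρ * (μ A).toReal ≤ (μ ({ω | F j ω = true} ∩ A)).toReal := by
    have h := (ENNReal.toReal_le_toReal
      (ENNReal.mul_ne_top ENNReal.ofReal_ne_top (measure_ne_top μ _))
      (measure_ne_top μ _)).2 (hcond j a)
    rwa [ENNReal.toReal_mul, ENNReal.toReal_ofReal hρ0] at h
  linarith

/-- Level bound: `F j = false` has probability at most `1-ρ` given `Ssum F j = r`. -/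
lemma level (μ : Measure Ω) [IsFiniteMeasure μ] (hF : ∀ i, Measurable (F i))
    {ρ : ℝ} (hρ0 : 0 ≤ ρ) (hcond : CondGE μ F ρ) (j r : ℕ) :
    (μ ({ω | F j ω = false} ∩ {ω | Ssum F j ω = r})).toReal ≤
      (1 - ρ) * (μ {ω | Ssum F j ω = r}).toReal := by
  set T := Finset.univ.filter (fun a : Fin j → Bool => cnt j a = r) with hT
  have hset := setOf_Ssum_eq F j r
  have hpd : (↑T : Set (Fin j → Bool)).PairwiseDisjoint (Atom F j) :=
    fun a _ b _ hab => atom_disjoint F j hab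
  have hpd2 : (↑T : Set (Fin j → Bool)).PairwiseDisjoint
      (fun a => {ω | F j ω = false} ∩ Atom F j a) :=
    fun a ha b hb hab => ((atom_disjoint F j hab).mono
      Set.inter_subset_right Set.inter_subset_right)
  have h1 : μ {ω | Ssum F j ω = r} = ∑ a ∈ T, μ (Atom F j a) := by
    rw [hset]
    exact measure_biUnion_finset hpd (fun a _ => measurableSet_atom F hF j a)
  have h2 : μ ({ω | F j ω = false} ∩ {ω | Ssum F j ω = r})
      = ∑ a ∈ T, μ ({ω | F j ω = false} ∩ Atom F j a) := by
    rw [hset, Set.inter_iUnion₂]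
    exact measure_biUnion_finset hpd2
      (fun a _ => (hF j (measurableSet_singleton false)).inter (measurableSet_atom F hF j a))
  rw [h1, h2, ENNReal.toReal_sum (fun a _ => measure_ne_top μ _),
    ENNReal.toReal_sum (fun a _ => measure_ne_top μ _), Finset.mul_sum]
  exact Finset.sum_le_sum fun a _ => atom_false F μ hF hρ0 hcond j a

/-- Main induction. -/
lemma main (μ : Measure Ω) [IsFiniteMeasure μ] (hF : ∀ i, Measurable (F i))
    {ρ : ℝ} (hρ0 : 0 ≤ ρ) (hρ1 : ρ ≤ 1) (hcond : CondGE μ F ρ) :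
    ∀ ℓ r, (μ {ω | Ssum F ℓ ω ≤ r}).toReal ≤ Bfun ρ ℓ r * (μ Set.univ).toReal := by
  intro ℓ
  induction ℓ with
  | zero =>
    intro r
    have huniv : {ω | Ssum F 0 ω ≤ r} = Set.univ := by
      ext ω; simp [Ssum]
    rw [huniv, Bfun_base, one_mul]
  | succ ℓ ih =>
    intro r
    have hsucc : ∀ ω : Ω, Ssum F (ℓ+1) ω = Ssum F ℓ ω + (if F ℓ ω = true then 1 else 0) :=
      fun ω => Finset.sum_range_succ _ ℓ
    have hdecomp : {ω | Ssum F (ℓ+1) ω ≤ r}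
        = {ω | Ssum F ℓ ω < r} ∪ ({ω | F ℓ ω = false} ∩ {ω | Ssum F ℓ ω = r}) := by
      ext ω
      simp only [Set.mem_setOf_eq, Set.mem_union, Set.mem_inter_iff, hsucc ω]
      rcases Bool.eq_false_or_eq_true (F ℓ ω) with h | h <;> simp [h] <;> omega
    have hdisj : Disjoint {ω | Ssum F ℓ ω < r}
        ({ω | F ℓ ω = false} ∩ {ω | Ssum F ℓ ω = r}) := by
      apply Set.disjoint_left.2
      rintro ω h1 ⟨-, h2⟩
      simp only [Set.mem_setOf_eq] at h1 h2
      omega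
    have hm2 : MeasurableSet ({ω | F ℓ ω = false} ∩ {ω | Ssum F ℓ ω = r}) :=
      (hF ℓ (measurableSet_singleton false)).inter (measurableSet_Ssum_eq F hF ℓ r)
    have hLHS : (μ {ω | Ssum F (ℓ+1) ω ≤ r}).toReal
        = (μ {ω | Ssum F ℓ ω < r}).toReal
          + (μ ({ω | F ℓ ω = false} ∩ {ω | Ssum F ℓ ω = r})).toReal := by
      rw [hdecomp, measure_union hdisj hm2,
        ENNReal.toReal_add (measure_ne_top μ _) (measure_ne_top μ _)]
    have hlevel := level F μ hF hρ0 hcond ℓ r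
    have hsplit2 : (μ {ω | Ssum F ℓ ω ≤ r}).toReal
        = (μ {ω | Ssum F ℓ ω < r}).toReal + (μ {ω | Ssum F ℓ ω = r}).toReal := by
      have hu : {ω | Ssum F ℓ ω ≤ r} = {ω | Ssum F ℓ ω < r} ∪ {ω | Ssum F ℓ ω = r} := by
        ext ω; simp only [Set.mem_setOf_eq, Set.mem_union]; omega
      have hd : Disjoint {ω | Ssum F ℓ ω < r} {ω | Ssum F ℓ ω = r} := by
        apply Set.disjoint_left.2
        intro ω h1 h2
        simp only [Set.mem_setOf_eq] at h1 h2
        omega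
      rw [hu, measure_union hd (measurableSet_Ssum_eq F hF ℓ r),
        ENNReal.toReal_add (measure_ne_top μ _) (measure_ne_top μ _)]
    rcases r with _ | s
    · have hlt : {ω | Ssum F ℓ ω < 0} = ∅ := by ext ω; simp
      have hν0 : (μ {ω | Ssum F ℓ ω < 0}).toReal = 0 := by rw [hlt]; simp
      have hb := ih 0
      rw [Bfun_zero] at hb ⊢
      rw [pow_succ]
      have h4 : (1 - ρ) * (μ {ω | Ssum F ℓ ω ≤ 0}).toReal
          ≤ (1 - ρ) * ((1 - ρ) ^ ℓ * (μ Set.univ).toReal) :=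
        mul_le_mul_of_nonneg_left hb (by linarith)
      nlinarith [hLHS, hlevel, hsplit2, hν0]
    · have hlt : {ω | Ssum F ℓ ω < s + 1} = {ω | Ssum F ℓ ω ≤ s} := by
        ext ω; simp [Nat.lt_succ_iff]
      have h1 : (μ {ω | Ssum F ℓ ω < s + 1}).toReal ≤ Bfun ρ ℓ s * (μ Set.univ).toReal := by
        rw [hlt]; exact ih s
      have h2 := ih (s + 1)
      have h3 : ρ * (μ {ω | Ssum F ℓ ω < s + 1}).toReal
          ≤ ρ * (Bfun ρ ℓ s * (μ Set.univ).toReal) := mul_le_mul_of_nonneg_left h1 hρ0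
      have h4 : (1 - ρ) * (μ {ω | Ssum F ℓ ω ≤ s + 1}).toReal
          ≤ (1 - ρ) * (Bfun ρ ℓ (s + 1) * (μ Set.univ).toReal) :=
        mul_le_mul_of_nonneg_left h2 (by linarith)
      have h5 : (1 - ρ) * (μ {ω | Ssum F ℓ ω = s + 1}).toReal
          = (1 - ρ) * (μ {ω | Ssum F ℓ ω ≤ s + 1}).toReal
            - (1 - ρ) * (μ {ω | Ssum F ℓ ω < s + 1}).toReal := by
        rw [hsplit2]; ring
      have h6 : (μ {ω | Ssum F ℓ ω < s + 1}).toReal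
          - (1 - ρ) * (μ {ω | Ssum F ℓ ω < s + 1}).toReal
          = ρ * (μ {ω | Ssum F ℓ ω < s + 1}).toReal := by ring
      rw [Bfun_rec]
      linarith [hLHS, hlevel, h3, h4, h5, h6]

end Stmt5Aux

/-- **Stochastic domination of a binomial.** If each `F j` equals `1` with conditional
probability at least `ρ` given its predecessors, then for every `ℓ` and `r` the probability
that `Σ_{i=1}^ℓ F_i ≤ r` is at most the binomial cumulative distribution
`Σ_{m=0}^{min(r,ℓ)} (ℓ choose m) ρ^m (1-ρ)^{ℓ-m}`. -/
theorem stmt5 {Ω : Type u} [MeasurableSpace Ω] (μ : Measure Ω) [IsFiniteMeasure μ]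
    (F : ℕ → Ω → Bool) (hF : ∀ i, Measurable (F i))
    (ρ : ℝ) (hρ0 : 0 < ρ) (hρ1 : ρ < 1) (hcond : CondGE μ F ρ)
    (ℓ r : ℕ) :
    μ {ω | (∑ i ∈ Finset.range ℓ, (if F i ω = true then (1 : ℕ) else 0)) ≤ r} ≤
      ENNReal.ofReal (∑ m ∈ Finset.range (min r ℓ + 1),
        (ℓ.choose m : ℝ) * ρ ^ m * (1 - ρ) ^ (ℓ - m)) * μ Set.univ := by
  have hmain := Stmt5Aux.main F μ hF hρ0.le hρ1.le hcond ℓ r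
  have hnn := Stmt5Aux.Bfun_nonneg hρ0.le hρ1.le ℓ r
  rw [← Stmt5Aux.Bfun_eq_min]
  calc μ {ω | (∑ i ∈ Finset.range ℓ, (if F i ω = true then (1 : ℕ) else 0)) ≤ r}
      = ENNReal.ofReal ((μ {ω | Stmt5Aux.Ssum F ℓ ω ≤ r}).toReal) :=
        (ENNReal.ofReal_toReal (measure_ne_top μ _)).symm
    _ ≤ ENNReal.ofReal (Stmt5Aux.Bfun ρ ℓ r * (μ Set.univ).toReal) :=
        ENNReal.ofReal_le_ofReal hmain
    _ = ENNReal.ofReal (Stmt5Aux.Bfun ρ ℓ r) * ENNReal.ofReal ((μ Set.univ).toReal) :=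
        ENNReal.ofReal_mul hnn
    _ = ENNReal.ofReal (Stmt5Aux.Bfun ρ ℓ r) * μ Set.univ := by
        rw [ENNReal.ofReal_toReal (measure_ne_top μ _)]
end

section
/- Let d ≥ 4. For every ζ > 1 there exists C′ such that for every 0 < ε < 1 and every N > 0 the following holds. Let M = M(x,n) be a matrix of Rauzy induction such that the permutation datum reached after the n steps is π_L, min_{j∈{d−1,d}} |C_j(M)| > (N/ε²) · max_{i≤d−2} |C_i(M)|, max_{j∈{d−1,d}} |C_j(M)| / min_{j∈{d−1,d}} |C_j(M)| < ζ, and max_{i≤d−2} |C_i(M)| / min_{i≤d−2} |C_i(M)| < ζ. Then λ_{d−1}({y ∈ MΔ : max((R^n y)_{d−1}, (R^n y)_d) > ε/N}) < C′ ε λ_{d−1}(MΔ). -/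
open MeasureTheory ENNReal Matrix

noncomputable section

/-- The open standard simplex in ℝ^d. -/
def openSimplex (d : ℕ) : Set (EuclideanSpace ℝ (Fin d)) :=
  {x | (∀ i, 0 < x i) ∧ ∑ i, x i = 1}

/-- A permutation datum: a pair of bijections of `{0, …, d-1}` (top and bottom rows). -/
structure PermDatum (d : ℕ) where
  top : Equiv.Perm (Fin d)
  bot : Equiv.Perm (Fin d)

/-- Irreducibility of a permutation datum: no proper initial block is preserved. -/
def PermDatum.Irreducible {d : ℕ} (π : PermDatum d) : Prop :=
  ∀ k : ℕ, 0 < k → k < d →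
    {i : Fin d | (π.top i : ℕ) < k} ≠ {i : Fin d | (π.bot i : ℕ) < k}

/-- The last position. -/
def lastIdx (d : ℕ) (h : 0 < d) : Fin d := ⟨d - 1, by omega⟩

/-- Package a bijective function on `Fin d` as a permutation. -/
def mkPerm {d : ℕ} (f : Fin d → Fin d) : Equiv.Perm (Fin d) := by
  classical exact if h : Function.Bijective f then Equiv.ofBijective f h else Equiv.refl _

/-- Successor in `Fin d`, clamped at the last position. -/
def finSucc {d : ℕ} (p : Fin d) : Fin d := ⟨min (p.1 + 1) (d - 1), by have := p.2; omega⟩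

/-- The new row after a Rauzy move in which `w` wins and `l` (occupying the last position of
the row `ρ`) loses: `l` is reinserted immediately after the position of `w`. -/
def bumpRow {d : ℕ} (ρ : Equiv.Perm (Fin d)) (w l : Fin d) : Fin d → Fin d := fun k =>
  if k = l then finSucc (ρ w) else if ρ k ≤ ρ w then ρ k else finSucc (ρ k)

/-- Winner and loser of one step of Rauzy induction (if defined). -/
def winLose {d : ℕ} (x : Fin d → ℝ) (π : PermDatum d) : Option (Fin d × Fin d) :=
  if h : 0 < d then
    let i := π.top.symm (lastIdx d h)
    let j := π.bot.symm (lastIdx d h)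
    if x j < x i then some (i, j) else if x i < x j then some (j, i) else none
  else none

/-- New permutation datum after a step in which `w` beats `l`. -/
def rauzyPermStep {d : ℕ} (π : PermDatum d) (w l : Fin d) : PermDatum d :=
  if h : 0 < d then
    if π.top w = lastIdx d h then ⟨π.top, mkPerm (bumpRow π.bot w l)⟩
    else ⟨mkPerm (bumpRow π.top w l), π.bot⟩
  else π

/-- One step of (unnormalized) Rauzy induction. -/
def rauzyStep {d : ℕ} (x : Fin d → ℝ) (π : PermDatum d) :
    Option ((Fin d → ℝ) × PermDatum d) :=
  (winLose x π).map fun wl =>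
    (Function.update x wl.1 (x wl.1 - x wl.2), rauzyPermStep π wl.1 wl.2)

/-- `n` steps of Rauzy induction (length data unnormalized). -/
def rauzyIter {d : ℕ} (x : Fin d → ℝ) (π : PermDatum d) :
    ℕ → Option ((Fin d → ℝ) × PermDatum d)
  | 0 => some (x, π)
  | n + 1 => (rauzyIter x π n).bind fun p => rauzyStep p.1 p.2

/-- The elementary matrix of a Rauzy step with winner `w` and loser `l`: the identity with its
`l`-th column replaced by `e_w + e_l`. -/
def elemMatrix {d : ℕ} (w l : Fin d) : Matrix (Fin d) (Fin d) ℝ :=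
  1 + Matrix.single w l 1

/-- The winner of the `(n+1)`-st step of Rauzy induction (if defined). -/
def stepWin {d : ℕ} (x : Fin d → ℝ) (π : PermDatum d) (n : ℕ) : Option (Fin d) :=
  (rauzyIter x π n).bind fun p => (winLose p.1 p.2).map Prod.fst

/-- The matrix `M(x,n) = E₁ E₂ ⋯ E_n` of the first `n` steps of Rauzy induction. -/
def rauzyMat {d : ℕ} (x : Fin d → ℝ) (π : PermDatum d) :
    ℕ → Option (Matrix (Fin d) (Fin d) ℝ)
  | 0 => some 1
  | n + 1 => (rauzyIter x π n).bind fun p =>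
      (winLose p.1 p.2).bind fun wl =>
        (rauzyMat x π n).map fun M => M * elemMatrix wl.1 wl.2

/-- Sum of the entries of the `j`-th column. -/
def colSum {d : ℕ} (M : Matrix (Fin d) (Fin d) ℝ) (j : Fin d) : ℝ := ∑ i, M i j

/-- The largest column entry sum `|C_max(M)| = ‖M‖`. -/
def maxColSum {d : ℕ} (M : Matrix (Fin d) (Fin d) ℝ) : ℝ := ⨆ j, colSum M j

/-- `ζ`-balanced: the ratio of the entry sums of any two columns is at most `ζ`. -/
def IsBalanced {d : ℕ} (ζ : ℝ) (M : Matrix (Fin d) (Fin d) ℝ) : Prop :=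
  ∀ j j', colSum M j ≤ ζ * colSum M j'

/-- Normalization of a vector to the affine hyperplane of coordinate-sum one. -/
def projNorm {d : ℕ} (v : Fin d → ℝ) : Fin d → ℝ := (∑ i, v i)⁻¹ • v

/-- The projectivized image `MΔ = {Mv/|Mv|₁ : v ∈ Δ}` of the simplex. -/
def mapSimplex {d : ℕ} (M : Matrix (Fin d) (Fin d) ℝ) : Set (EuclideanSpace ℝ (Fin d)) :=
  {y | ∃ v ∈ openSimplex d, (y : Fin d → ℝ) = projNorm (M.mulVec v)}

/-- `R^r y`: the point of `Δ` proportional to `M⁻¹ y`. -/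
def Rback {d : ℕ} (M : Matrix (Fin d) (Fin d) ℝ) (y : Fin d → ℝ) : Fin d → ℝ :=
  projNorm (M⁻¹.mulVec y)

/-- The hyperelliptic permutation datum: top row `1, …, d`; bottom row `d, …, 1`. -/
def piS (d : ℕ) : PermDatum d := ⟨Equiv.refl _, Fin.revPerm⟩

/-- Helper: an element of `Fin d` from a natural number (mod `d`), with the positivity of `d`
witnessed by a given element. -/
def fmk {d : ℕ} (k : Fin d) (n : ℕ) : Fin d := ⟨n % d, Nat.mod_lt n k.pos⟩

/-- The permutation datum `π_L`: top row `1, d-1, d, 2, 3, …, d-2`; bottom row `d, …, 1`. -/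
def piL (d : ℕ) : PermDatum d :=
  ⟨mkPerm (fun k => if (k : ℕ) = 0 then fmk k 0
      else if (k : ℕ) = d - 2 then fmk k 1
      else if (k : ℕ) = d - 1 then fmk k 2
      else fmk k ((k : ℕ) + 2)),
   Fin.revPerm⟩

/-- The permutation datum `π_R`: top row `1, 2, …, d`; bottom row `d, d-2, d-3, …, 1, d-1`. -/
def piR (d : ℕ) : PermDatum d :=
  ⟨Equiv.refl _,
   mkPerm (fun k => if (k : ℕ) = d - 1 then fmk k 0
      else if (k : ℕ) = d - 2 then fmk k (d - 1)
      else fmk k (d - 2 - (k : ℕ)))⟩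

/-- A matrix on the left hand side: the matrix of a finite path of Rauzy induction starting at
`π_L` in which the winner of every step lies in `{1, …, d-2}`. -/
def IsLHSMatrix (d : ℕ) (A : Matrix (Fin d) (Fin d) ℝ) : Prop :=
  ∃ (z : Fin d → ℝ) (m : ℕ), (∀ i, 0 < z i) ∧ rauzyMat z (piL d) m = some A ∧
    ∀ k < m, ∀ w : Fin d, stepWin z (piL d) k = some w → (w : ℕ) < d - 2

/-- A matrix on the right hand side: the matrix of a finite path of Rauzy induction starting at
`π_R` in which the winner of every step lies in `{d-1, d}`. -/
def IsRHSMatrix (d : ℕ) (B : Matrix (Fin d) (Fin d) ℝ) : Prop :=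
  ∃ (z : Fin d → ℝ) (m : ℕ), (∀ i, 0 < z i) ∧ rauzyMat z (piR d) m = some B ∧
    ∀ k < m, ∀ w : Fin d, stepWin z (piR d) k = some w → d - 2 ≤ (w : ℕ)

/-- `V(M)`: the nonnegative span of the first `d-2` columns of `M`, intersected with `Δ`. -/
def Vface {d : ℕ} (M : Matrix (Fin d) (Fin d) ℝ) : Set (EuclideanSpace ℝ (Fin d)) :=
  {y | ∃ a : Fin d → ℝ, (∀ i, 0 ≤ a i) ∧ (∀ i : Fin d, d - 2 ≤ (i : ℕ) → a i = 0) ∧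
    (y : Fin d → ℝ) = M.mulVec a} ∩ openSimplex d

/-- `W(M)`: the nonnegative span of the last two columns of `M`, intersected with `Δ`. -/
def Wface {d : ℕ} (M : Matrix (Fin d) (Fin d) ℝ) : Set (EuclideanSpace ℝ (Fin d)) :=
  {y | ∃ a : Fin d → ℝ, (∀ i, 0 ≤ a i) ∧ (∀ i : Fin d, (i : ℕ) < d - 2 → a i = 0) ∧
    (y : Fin d → ℝ) = M.mulVec a} ∩ openSimplex d

/-- Left endpoint data: the sum of the lengths of the intervals preceding `ℓ` in the row `ρ`. -/
def ietLeft {d : ℕ} (x : Fin d → ℝ) (ρ : Equiv.Perm (Fin d)) (ℓ : Fin d) : ℝ :=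
  ∑ k ∈ Finset.univ.filter (fun k => ρ k < ρ ℓ), x k

/-- The subinterval `I_ℓ` of `[0,1)` corresponding to the symbol `ℓ`. -/
def ietInterval {d : ℕ} (x : Fin d → ℝ) (π : PermDatum d) (ℓ : Fin d) : Set ℝ :=
  Set.Ico (ietLeft x π.top ℓ) (ietLeft x π.top ℓ + x ℓ)

/-- The interval exchange transformation `T_{x,π}`. -/
def iet {d : ℕ} (x : Fin d → ℝ) (π : PermDatum d) : ℝ → ℝ := fun y => by
  classical exact
    if h : ∃ ℓ, y ∈ ietInterval x π ℓ then
      y - ietLeft x π.top (Classical.choose h) + ietLeft x π.bot (Classical.choose h)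
    else y

/-- Unique ergodicity: Lebesgue measure on `[0,1)` is the only `T`-invariant Borel
probability measure carried by `[0,1)`. -/
def UniquelyErgodic (T : ℝ → ℝ) : Prop :=
  ∀ μ : Measure ℝ, IsProbabilityMeasure μ → μ (Set.Ico (0 : ℝ) 1)ᶜ = 0 →
    (∀ s : Set ℝ, MeasurableSet s → μ (T ⁻¹' s) = μ s) →
    μ = volume.restrict (Set.Ico (0 : ℝ) 1)

/-- The set of non-uniquely ergodic interval exchange transformations with permutation `π`. -/
def NUE (d : ℕ) (π : PermDatum d) : Set (EuclideanSpace ℝ (Fin d)) :=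
  {x ∈ openSimplex d | ¬ UniquelyErgodic (iet x π)}

/-- The Rauzy move on permutation data in the case where the top symbol wins. -/
def topMove {d : ℕ} (π : PermDatum d) : PermDatum d :=
  if h : 0 < d then
    ⟨π.top, mkPerm (bumpRow π.bot (π.top.symm (lastIdx d h)) (π.bot.symm (lastIdx d h)))⟩
  else π

/-- The Rauzy move on permutation data in the case where the bottom symbol wins. -/
def botMove {d : ℕ} (π : PermDatum d) : PermDatum d :=
  if h : 0 < d then
    ⟨mkPerm (bumpRow π.top (π.bot.symm (lastIdx d h)) (π.top.symm (lastIdx d h))), π.bot⟩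
  else π

/-- The Rauzy class of the hyperelliptic permutation datum: the smallest set of permutation
data containing `π_s` and closed under both Rauzy moves. -/
inductive InRauzyClass (d : ℕ) : PermDatum d → Prop
  | base : InRauzyClass d (piS d)
  | top {π : PermDatum d} : InRauzyClass d π → InRauzyClass d (topMove π)
  | bot {π : PermDatum d} : InRauzyClass d π → InRauzyClass d (botMove π)

end

/-!
Coning turns the projective action of `M` into a linear one. For `S` in the hyperplane
`∑ y = 1`, the cone `{t • y | 0 < t ≤ 1, y ∈ S}` has volume `1/d` times the Lebesgue measure of
`S` read in the affine chart `u ↦ (u, 1 - ∑ u)`; as the chart and its inverse are Lipschitz, that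
measure agrees with `μH[d-1] S` up to a factor depending only on `d`. The matrix `M` maps the
corner `{w > 0 | ∑ |C_j(M)| w_j ≤ 1}` onto the cone over `MΔ`, and the part of the corner where
one of the last two coordinates of `w / |w|₁` exceeds `ε/N` onto the cone over the set to be
estimated, multiplying both volumes by `|det M|`.

On that part, `w_j > (ε/N) |w|₁` for some `j ∈ {d-1, d}` and `|C_i| < (ε²/N) |C_j|` for `i ≤ d-2`
give `∑_{i ≤ d-2} |C_i| w_i < ε`. Hence the diagonal map multiplying the first `d-2` coordinates
by `2ε` and the last two by `2` carries the corner onto a set containing that part, whose volume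
is therefore at most `2^d ε^(d-2)` times the volume of the corner.
-/

open Finset

section RauzyMatrix

variable {d : ℕ}

theorem winLose_eq_some_ne {x : Fin d → ℝ} {π : PermDatum d} {w l : Fin d}
    (h : winLose x π = some (w, l)) : w ≠ l := by
  have hd : 0 < d := w.pos
  simp only [winLose, dif_pos hd] at h
  split_ifs at h with h₁ h₂ <;> simp only [Option.some.injEq, Prod.mk.injEq] at h <;>
    obtain ⟨rfl, rfl⟩ := h
  · exact fun h => h₁.ne' (congrArg x h)
  · exact fun h => h₂.ne' (congrArg x h)

theorem elemMatrix_nonneg (w l i j : Fin d) : 0 ≤ elemMatrix w l i j := by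
  simp only [elemMatrix, Matrix.add_apply, one_apply, single_apply]
  split_ifs <;> norm_num

theorem det_elemMatrix {w l : Fin d} (h : w ≠ l) : (elemMatrix w l).det = 1 :=
  det_transvection_of_ne w l h 1

theorem rauzyMat_succ {x : Fin d → ℝ} {π : PermDatum d} {n : ℕ} {M' : Matrix (Fin d) (Fin d) ℝ}
    (h : rauzyMat x π (n + 1) = some M') :
    ∃ M w l, rauzyMat x π n = some M ∧ w ≠ l ∧ M' = M * elemMatrix w l := by
  obtain ⟨p, -, h⟩ := Option.bind_eq_some_iff.1 h
  obtain ⟨⟨w, l⟩, hwl, h⟩ := Option.bind_eq_some_iff.1 h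
  obtain ⟨M, hM, rfl⟩ := Option.map_eq_some_iff.1 h
  exact ⟨M, w, l, hM, winLose_eq_some_ne hwl, rfl⟩

theorem rauzyMat_nonneg {x : Fin d → ℝ} {π : PermDatum d} {n : ℕ}
    {M : Matrix (Fin d) (Fin d) ℝ} (h : rauzyMat x π n = some M) (i j : Fin d) : 0 ≤ M i j := by
  induction n generalizing M i j with
  | zero =>
    obtain rfl : 1 = M := Option.some.inj h
    exact zero_le_one_elem i j
  | succ n ih =>
    obtain ⟨M, w, l, hM, -, rfl⟩ := rauzyMat_succ h
    rw [mul_apply]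
    exact sum_nonneg fun k _ => mul_nonneg (ih hM i k) (elemMatrix_nonneg w l k j)

theorem det_rauzyMat {x : Fin d → ℝ} {π : PermDatum d} {n : ℕ}
    {M : Matrix (Fin d) (Fin d) ℝ} (h : rauzyMat x π n = some M) : M.det = 1 := by
  induction n generalizing M with
  | zero => obtain rfl : 1 = M := Option.some.inj h; exact det_one
  | succ n ih =>
    obtain ⟨M, w, l, hM, hwl, rfl⟩ := rauzyMat_succ h
    rw [det_mul, ih hM, det_elemMatrix hwl, one_mul]

end RauzyMatrix

section Normalization

variable {d : ℕ}

theorem projNorm_apply (v : Fin d → ℝ) (i : Fin d) : projNorm v i = (∑ j, v j)⁻¹ * v i := rfl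

theorem sum_projNorm {v : Fin d → ℝ} (hv : ∑ i, v i ≠ 0) : ∑ i, projNorm v i = 1 := by
  simp only [projNorm_apply, ← mul_sum, inv_mul_cancel₀ hv]

theorem projNorm_smul (v : Fin d → ℝ) {t : ℝ} (ht : t ≠ 0) : projNorm (t • v) = projNorm v := by
  ext i
  simp only [projNorm_apply, Pi.smul_apply, smul_eq_mul, ← mul_sum, mul_inv]
  field_simp

theorem projNorm_of_sum_eq_one {v : Fin d → ℝ} (hv : ∑ i, v i = 1) : projNorm v = v := by
  simp [projNorm, hv]

theorem sum_mulVec_eq_sum_colSum_mul (M : Matrix (Fin d) (Fin d) ℝ) (v : Fin d → ℝ) :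
    ∑ i, (M *ᵥ v) i = ∑ j, colSum M j * v j := by
  simp only [mulVec, dotProduct, colSum, sum_mul]
  exact sum_comm

theorem mulVec_projNorm (M : Matrix (Fin d) (Fin d) ℝ) (v : Fin d → ℝ) :
    M *ᵥ projNorm v = (∑ i, v i)⁻¹ • (M *ᵥ v) :=
  mulVec_smul M _ v

variable {M : Matrix (Fin d) (Fin d) ℝ}

theorem inv_mulVec_mulVec (hdet : M.det ≠ 0) (v : Fin d → ℝ) : M⁻¹ *ᵥ (M *ᵥ v) = v := by
  rw [mulVec_mulVec, nonsing_inv_mul M (isUnit_iff_ne_zero.2 hdet), one_mulVec]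

theorem mulVec_inv_mulVec (hdet : M.det ≠ 0) (v : Fin d → ℝ) : M *ᵥ (M⁻¹ *ᵥ v) = v := by
  rw [mulVec_mulVec, mul_nonsing_inv M (isUnit_iff_ne_zero.2 hdet), one_mulVec]

theorem mulVec_nonneg (hM : ∀ i j, 0 ≤ M i j) {v : Fin d → ℝ} (hv : ∀ i, 0 ≤ v i) (i : Fin d) :
    0 ≤ (M *ᵥ v) i := by
  unfold mulVec dotProduct
  exact sum_nonneg fun j _ => mul_nonneg (hM i j) (hv j)

theorem colSum_pos (hM : ∀ i j, 0 ≤ M i j) (hdet : M.det ≠ 0) (j : Fin d) : 0 < colSum M j := by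
  refine (sum_nonneg fun i _ => hM i j).lt_of_ne fun h => hdet ?_
  exact det_eq_zero_of_column_eq_zero j fun i =>
    (sum_eq_zero_iff_of_nonneg fun i _ => hM i j).1 h.symm i (mem_univ i)

theorem Rback_smul (M : Matrix (Fin d) (Fin d) ℝ) (y : Fin d → ℝ) {t : ℝ} (ht : t ≠ 0) :
    Rback M (t • y) = Rback M y := by
  rw [Rback, mulVec_smul, projNorm_smul _ ht, Rback]

theorem sum_mulVec_pos [NeZero d] (hM : ∀ i j, 0 ≤ M i j) (hdet : M.det ≠ 0) {v : Fin d → ℝ}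
    (hv : ∀ i, 0 < v i) : 0 < ∑ i, (M *ᵥ v) i := by
  rw [sum_mulVec_eq_sum_colSum_mul]
  exact sum_pos (fun j _ => mul_pos (colSum_pos hM hdet j) (hv j)) univ_nonempty

theorem Rback_projNorm {v : Fin d → ℝ} (hv : ∑ i, v i ≠ 0) : Rback M (projNorm v) = Rback M v :=
  Rback_smul M v (inv_ne_zero hv)

theorem mem_mapSimplex_iff [NeZero d] (hM : ∀ i j, 0 ≤ M i j) (hdet : M.det ≠ 0)
    (y : EuclideanSpace ℝ (Fin d)) :
    y ∈ mapSimplex M ↔ ∑ i, y i = 1 ∧ ∀ i, 0 < (M⁻¹ *ᵥ y) i := by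
  constructor
  · rintro ⟨v, ⟨hv, -⟩, hy⟩
    have hσ := sum_mulVec_pos hM hdet hv
    refine ⟨by rw [hy]; exact sum_projNorm hσ.ne', fun i => ?_⟩
    rw [hy, projNorm, mulVec_smul, inv_mulVec_mulVec hdet]
    exact mul_pos (inv_pos.2 hσ) (hv i)
  · rintro ⟨hy, hpos⟩
    have hσ : 0 < ∑ i, (M⁻¹ *ᵥ y) i := sum_pos (fun i _ => hpos i) univ_nonempty
    refine ⟨WithLp.toLp 2 (projNorm (M⁻¹ *ᵥ y)),
      ⟨fun i => mul_pos (inv_pos.2 hσ) (hpos i), sum_projNorm hσ.ne'⟩, ?_⟩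
    change (y : Fin d → ℝ) = projNorm (M *ᵥ projNorm (M⁻¹ *ᵥ y))
    rw [mulVec_projNorm, mulVec_inv_mulVec hdet, projNorm_smul _ (inv_ne_zero hσ.ne'),
      projNorm_of_sum_eq_one hy]

theorem nonneg_of_mem_mapSimplex (hM : ∀ i j, 0 ≤ M i j) {y : EuclideanSpace ℝ (Fin d)}
    (hy : y ∈ mapSimplex M) (i : Fin d) : 0 ≤ y i := by
  obtain ⟨v, ⟨hv, -⟩, hy⟩ := hy
  have hMv := mulVec_nonneg hM fun j => (hv j).le
  rw [show y i = projNorm (M *ᵥ v) i from congrFun hy i, projNorm_apply]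
  exact mul_nonneg (inv_nonneg.2 (sum_nonneg fun i _ => hMv i)) (hMv i)

end Normalization

section Measurability

variable {d : ℕ}

theorem measurable_projNorm : Measurable (projNorm : (Fin d → ℝ) → Fin d → ℝ) := by
  unfold projNorm
  fun_prop

theorem measurable_Rback (M : Matrix (Fin d) (Fin d) ℝ) : Measurable (Rback M) :=
  measurable_projNorm.comp (Continuous.matrix_mulVec continuous_const continuous_id).measurable

theorem measurableSet_mapSimplex [NeZero d] {M : Matrix (Fin d) (Fin d) ℝ}
    (hM : ∀ i j, 0 ≤ M i j) (hdet : M.det ≠ 0) : MeasurableSet (mapSimplex M) := by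
  have h : mapSimplex M = {y : EuclideanSpace ℝ (Fin d) | ∑ i, y i = 1} ∩
      ⋂ i, {y | 0 < (M⁻¹ *ᵥ y) i} := by
    ext y
    simp [mem_mapSimplex_iff hM hdet]
  rw [h]
  exact (measurableSet_eq_fun (by fun_prop) measurable_const).inter
    (.iInter fun i => measurableSet_lt measurable_const (by fun_prop))

end Measurability

section SimplexChart

open NNReal

variable {m : ℕ}

def simplexChart (m : ℕ) (u : Fin m → ℝ) : EuclideanSpace ℝ (Fin (m + 1)) :=
  WithLp.toLp 2 (Fin.snoc u (1 - ∑ i, u i))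

theorem simplexChart_castSucc (u : Fin m → ℝ) (j : Fin m) :
    simplexChart m u j.castSucc = u j := by
  simp [simplexChart]

theorem simplexChart_last (u : Fin m → ℝ) : simplexChart m u (Fin.last m) = 1 - ∑ i, u i := by
  simp [simplexChart]

theorem simplexChart_init {y : Fin (m + 1) → ℝ} (hy : ∑ i, y i = 1) :
    simplexChart m (Fin.init y) = WithLp.toLp 2 y := by
  ext i
  refine Fin.lastCases ?_ (fun j => simplexChart_castSucc _ j) i
  rw [simplexChart_last, ← hy, Fin.sum_univ_castSucc]
  simp [Fin.init]

theorem init_simplexChart (u : Fin m → ℝ) : Fin.init (simplexChart m u : Fin (m + 1) → ℝ) = u :=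
  funext (simplexChart_castSucc u)

theorem continuous_simplexChart : Continuous (simplexChart m) := by
  unfold simplexChart
  fun_prop

theorem hausdorffMeasure_pi_fin : (μH[m] : Measure (Fin m → ℝ)) = volume := by
  simpa using hausdorffMeasure_pi_real (ι := Fin m)

theorem lipschitzWith_simplexChart :
    ∃ K : ℝ≥0, LipschitzWith K (simplexChart m) := by
  refine ⟨_, (PiLp.lipschitzWith_toLp 2 _).comp (Kg := m + 1) ?_⟩
  refine LipschitzWith.of_dist_le_mul fun u u' => (dist_pi_le_iff (by positivity)).2 fun i => ?_
  have hcoord : ∀ j, dist (u j) (u' j) ≤ dist u u' := dist_le_pi_dist u u'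
  push_cast
  refine Fin.lastCases ?_ (fun j => ?_) i
  · rw [Fin.snoc_last, Fin.snoc_last, Real.dist_eq,
      show 1 - ∑ i, u i - (1 - ∑ i, u' i) = ∑ j, (u' j - u j) by rw [sum_sub_distrib]; ring]
    calc |∑ j, (u' j - u j)| ≤ ∑ j, |u' j - u j| := abs_sum_le_sum_abs _ _
      _ ≤ ∑ _j : Fin m, dist u u' := sum_le_sum fun j _ => by
          rw [← Real.dist_eq, dist_comm]; exact hcoord j
      _ ≤ (m + 1) * dist u u' := by
          rw [sum_const, card_univ, Fintype.card_fin, nsmul_eq_mul]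
          nlinarith [dist_nonneg (x := u) (y := u')]
  · simp only [Fin.snoc_castSucc]
    nlinarith [hcoord j, dist_nonneg (x := u) (y := u'), (m.cast_nonneg : (0 : ℝ) ≤ m)]

theorem lipschitzWith_init : LipschitzWith 1 (Fin.init : (Fin (m + 1) → ℝ) → Fin m → ℝ) :=
  LipschitzWith.of_dist_le_mul fun y y' => by
    rw [NNReal.coe_one, one_mul]
    exact (dist_pi_le_iff dist_nonneg).2 fun j => dist_le_pi_dist y y' j.castSucc

theorem volume_preimage_simplexChart_le (S : Set (EuclideanSpace ℝ (Fin (m + 1)))) :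
    volume (simplexChart m ⁻¹' S) ≤ μH[m] S := by
  have hproj := lipschitzWith_init.comp (PiLp.lipschitzWith_ofLp 2 fun _ : Fin (m + 1) => ℝ)
  calc volume (simplexChart m ⁻¹' S) ≤ μH[m] ((Fin.init ∘ WithLp.ofLp) '' S) := by
        rw [hausdorffMeasure_pi_fin]
        exact measure_mono fun u hu => ⟨_, hu, init_simplexChart u⟩
    _ ≤ μH[m] S := by
        simpa using hproj.hausdorffMeasure_image_le (Nat.cast_nonneg m) S

theorem hausdorffMeasure_le_volume_preimage_simplexChart {K : ℝ≥0}
    (hK : LipschitzWith K (simplexChart m)) {S : Set (EuclideanSpace ℝ (Fin (m + 1)))}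
    (hS : ∀ y ∈ S, ∑ i, y i = 1) :
    μH[m] S ≤ (K : ℝ≥0∞) ^ m * volume (simplexChart m ⁻¹' S) := by
  have hSimage : simplexChart m '' (simplexChart m ⁻¹' S) = S :=
    Set.image_preimage_eq_of_subset fun y hy => ⟨_, (simplexChart_init (hS y hy)).trans rfl⟩
  calc μH[m] S = μH[m] (simplexChart m '' (simplexChart m ⁻¹' S)) := by rw [hSimage]
    _ ≤ (K : ℝ≥0∞) ^ (m : ℝ) * μH[m] (simplexChart m ⁻¹' S) :=
        hK.hausdorffMeasure_image_le (Nat.cast_nonneg m) _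
    _ = (K : ℝ≥0∞) ^ m * volume (simplexChart m ⁻¹' S) := by
        rw [hausdorffMeasure_pi_fin, ENNReal.rpow_natCast]

theorem volume_preimage_simplexChart_lt_top {S : Set (EuclideanSpace ℝ (Fin (m + 1)))}
    (hS : ∀ y ∈ S, ∀ i, 0 ≤ y i) : volume (simplexChart m ⁻¹' S) < ⊤ := by
  refine ((Metric.isBounded_Icc (0 : Fin m → ℝ) 1).subset fun u hu => ?_).measure_lt_top
  have hu0 : ∀ j, 0 ≤ u j := fun j => simplexChart_castSucc u j ▸ hS _ hu j.castSucc
  have hsum : ∑ j, u j ≤ 1 := by linarith [simplexChart_last u ▸ hS _ hu (Fin.last m)]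
  exact ⟨hu0, fun j => (single_le_sum (fun j _ => hu0 j) (mem_univ j)).trans hsum⟩

end SimplexChart

section SimplexCone

open Pointwise

variable {m : ℕ}

def lastCone (B : Set (Fin m → ℝ)) : Set (Fin (m + 1) → ℝ) :=
  {y | y (Fin.last m) ∈ Set.Ioc 0 1 ∧ (y (Fin.last m))⁻¹ • Fin.init y ∈ B}

theorem lintegral_Ioc_zero_one_pow (m : ℕ) :
    ∫⁻ t in Set.Ioc (0 : ℝ) 1, ENNReal.ofReal (t ^ m) = ((m : ℝ≥0∞) + 1)⁻¹ := by
  rw [← ofReal_integral_eq_lintegral_ofReal (continuous_pow m).integrableOn_Ioc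
      ((ae_restrict_mem measurableSet_Ioc).mono fun t ht => pow_nonneg ht.1.le m),
    ← intervalIntegral.integral_of_le zero_le_one, integral_pow]
  rw [one_pow, zero_pow (Nat.succ_ne_zero m), sub_zero, one_div,
    ENNReal.ofReal_inv_of_pos (by positivity)]
  norm_cast

theorem volume_lastCone {B : Set (Fin m → ℝ)} (hB : MeasurableSet B) :
    volume (lastCone B) = ((m : ℝ≥0∞) + 1)⁻¹ * volume B := by
  let e := MeasurableEquiv.piFinSuccAbove (fun _ : Fin (m + 1) => ℝ) (Fin.last m)
  let T : Set (ℝ × (Fin m → ℝ)) := {p | p.1 ∈ Set.Ioc 0 1 ∧ p.1⁻¹ • p.2 ∈ B}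
  have hT : MeasurableSet T :=
    (measurable_fst measurableSet_Ioc).inter ((measurable_fst.inv.smul measurable_snd) hB)
  have hcone : lastCone B = e ⁻¹' T := by
    ext y
    simp [lastCone, T, e]
  -- Fubini over the last coordinate: the slice of `T` at height `t ∈ (0, 1]` is `t • B`.
  have hslice : ∀ t, volume (Prod.mk t ⁻¹' T) =
      (Set.Ioc 0 1).indicator (fun t => ENNReal.ofReal (t ^ m) * volume B) t := by
    intro t
    by_cases ht : t ∈ Set.Ioc (0 : ℝ) 1
    · have : Prod.mk t ⁻¹' T = t • B := by
        ext v
        simp [T, ht.1, ht.2, Set.mem_smul_set_iff_inv_smul_mem₀ ht.1.ne']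
      rw [this, Measure.addHaar_smul, Set.indicator_of_mem ht, Module.finrank_fin_fun,
        abs_of_pos (pow_pos ht.1 m)]
    · have : Prod.mk t ⁻¹' T = ∅ := by
        ext v
        simp only [T, Set.mem_preimage, Set.mem_empty_iff_false, iff_false]
        exact fun h => ht h.1
      rw [this, measure_empty, Set.indicator_of_notMem ht]
  rw [hcone, (volume_preserving_piFinSuccAbove _ _).measure_preimage_equiv, Measure.volume_eq_prod,
    Measure.prod_apply hT, lintegral_congr (fun t => hslice t),
    lintegral_indicator measurableSet_Ioc, lintegral_mul_const _ (by fun_prop),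
    lintegral_Ioc_zero_one_pow]

/-- For `S` in the hyperplane `∑ y = 1` this is the cone `{t • y | 0 < t ≤ 1, y ∈ S}`. -/
def simplexCone {d : ℕ} (S : Set (EuclideanSpace ℝ (Fin d))) : Set (Fin d → ℝ) :=
  {z | 0 < ∑ i, z i ∧ ∑ i, z i ≤ 1 ∧ WithLp.toLp 2 (projNorm z) ∈ S}

def sumLastMatrix (m : ℕ) : Matrix (Fin (m + 1)) (Fin (m + 1)) ℝ :=
  Matrix.of fun i j => if i = Fin.last m ∨ i = j then 1 else 0

theorem det_sumLastMatrix : (sumLastMatrix m).det = 1 := by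
  rw [det_of_isLowerTriangular]
  · simp [sumLastMatrix]
  · intro i j (hij : i < j)
    simp [sumLastMatrix, hij.ne, (hij.trans_le (Fin.le_last j)).ne]

theorem sumLastMatrix_mulVec_last (z : Fin (m + 1) → ℝ) :
    (sumLastMatrix m *ᵥ z) (Fin.last m) = ∑ i, z i := by
  simp [sumLastMatrix, mulVec, dotProduct]

theorem init_sumLastMatrix_mulVec (z : Fin (m + 1) → ℝ) :
    Fin.init (sumLastMatrix m *ᵥ z) = Fin.init z := by
  ext j
  simp [sumLastMatrix, mulVec, dotProduct, Fin.init, (Fin.castSucc_lt_last j).ne]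

theorem simplexCone_eq_preimage (S : Set (EuclideanSpace ℝ (Fin (m + 1)))) :
    simplexCone S = toLin' (sumLastMatrix m) ⁻¹' lastCone (simplexChart m ⁻¹' S) := by
  ext z
  simp only [simplexCone, lastCone, Set.mem_preimage, toLin'_apply, sumLastMatrix_mulVec_last,
    init_sumLastMatrix_mulVec, Set.mem_Ioc, and_assoc, Set.mem_ofPred_eq]
  refine and_congr_right fun hz => and_congr_right fun _ => ?_
  rw [show (∑ i, z i)⁻¹ • Fin.init z = Fin.init (projNorm z) from rfl,
    simplexChart_init (sum_projNorm hz.ne')]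

theorem volume_simplexCone {S : Set (EuclideanSpace ℝ (Fin (m + 1)))} (hS : MeasurableSet S) :
    volume (simplexCone S) = ((m : ℝ≥0∞) + 1)⁻¹ * volume (simplexChart m ⁻¹' S) := by
  rw [simplexCone_eq_preimage, Measure.addHaar_preimage_linearMap, LinearMap.det_toLin',
    det_sumLastMatrix, volume_lastCone (continuous_simplexChart.measurable hS)]
  · simp
  · simp [det_sumLastMatrix]

end SimplexCone

section WeightedCorner

def weightedCorner {d : ℕ} (c : Fin d → ℝ) : Set (Fin d → ℝ) :=
  {w | (∀ i, 0 < w i) ∧ ∑ i, c i * w i ≤ 1}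

variable {d : ℕ} {c : Fin d → ℝ}

theorem volume_weightedCorner_pos (hc : ∀ i, 0 < c i) :
    0 < volume (weightedCorner c) := by
  set t := (1 + ∑ i, c i)⁻¹
  have hcsum : 0 ≤ ∑ i, c i := sum_nonneg fun i _ => (hc i).le
  have ht : 0 < t := inv_pos.2 (by linarith)
  refine lt_of_lt_of_le ?_ (measure_mono (s := Set.pi Set.univ fun _ => Set.Ioo 0 t) ?_)
  · rw [Real.volume_pi_Ioo]
    simpa using ENNReal.pow_pos (ENNReal.ofReal_pos.2 ht) d
  · intro w hw
    simp only [Set.mem_pi, Set.mem_univ, Set.mem_Ioo, true_implies] at hw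
    refine ⟨fun i => (hw i).1, ?_⟩
    calc ∑ i, c i * w i ≤ ∑ i, c i * t := sum_le_sum fun i _ => by
          exact mul_le_mul_of_nonneg_left (hw i).2.le (hc i).le
      _ ≤ 1 := by
          rw [← sum_mul, ← div_eq_mul_inv, div_le_one (by linarith)]
          linarith

variable (p : Fin d → Prop) [DecidablePred p]

theorem sum_filter_mul_lt_of_projNorm_gt (hc : ∀ i, 0 < c i) {r δ : ℝ} (hr : 0 < r)
    (hδ : 0 ≤ δ) (hdom : ∀ i j, p i → ¬ p j → c i ≤ r * δ * c j) {w : Fin d → ℝ}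
    (hw : w ∈ weightedCorner c) {j : Fin d} (hj : ¬ p j) (hwj : δ < projNorm w j) :
    ∑ i ∈ univ.filter p, c i * w i < r := by
  obtain ⟨hw, hw1⟩ := hw
  have hsum : 0 < ∑ i, w i := sum_pos (fun i _ => hw i) ⟨j, mem_univ j⟩
  rw [projNorm_apply, inv_mul_eq_div, lt_div_iff₀ hsum] at hwj
  calc ∑ i ∈ univ.filter p, c i * w i
      ≤ ∑ i ∈ univ.filter p, r * δ * c j * w i :=
        sum_le_sum fun i hi =>
          mul_le_mul_of_nonneg_right (hdom i j (mem_filter.1 hi).2 hj) (hw i).le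
    _ ≤ r * δ * c j * ∑ i, w i := by
        rw [← mul_sum]
        exact mul_le_mul_of_nonneg_left
          (sum_le_sum_of_subset_of_nonneg (filter_subset _ _) fun i _ _ => (hw i).le)
          (by have := hc j; positivity)
    _ < r * (c j * w j) := by
        have := mul_lt_mul_of_pos_left hwj (mul_pos hr (hc j))
        linarith
    _ ≤ r := by
        refine mul_le_of_le_one_right hr.le ((single_le_sum (fun i _ => ?_) (mem_univ j)).trans hw1)
        exact (mul_pos (hc i) (hw i)).le

theorem volume_sep_weightedCorner_le (hc : ∀ i, 0 < c i) {r δ : ℝ} (hr : 0 < r) (hδ : 0 ≤ δ)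
    (hdom : ∀ i j, p i → ¬ p j → c i ≤ r * δ * c j) :
    volume {w ∈ weightedCorner c | ∃ j, ¬ p j ∧ δ < projNorm w j} ≤
      ENNReal.ofReal (2 ^ d * r ^ (univ.filter p).card) * volume (weightedCorner c) := by
  set a : Fin d → ℝ := fun i => if p i then 2 * r else 2
  have ha : ∀ i, 0 < a i := fun i => by by_cases h : p i <;> simp [a, h, hr]
  have hsub : {w ∈ weightedCorner c | ∃ j, ¬ p j ∧ δ < projNorm w j} ⊆
      toLin' (diagonal a) '' weightedCorner c := by
    rintro w ⟨hw, j, hj, hwj⟩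
    have hsmall := sum_filter_mul_lt_of_projNorm_gt p hc hr hδ hdom hw hj hwj
    refine ⟨fun i => w i / a i, ⟨fun i => div_pos (hw.1 i) (ha i), ?_⟩, ?_⟩
    · have hlarge : ∑ i ∈ univ.filter (¬ p ·), c i * w i ≤ 1 :=
        (sum_le_sum_of_subset_of_nonneg (filter_subset _ _)
          fun i _ _ => (mul_pos (hc i) (hw.1 i)).le).trans hw.2
      calc ∑ i, c i * (w i / a i)
          = (∑ i ∈ univ.filter p, c i * w i) / (2 * r) +
              (∑ i ∈ univ.filter (¬ p ·), c i * w i) / 2 := by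
            rw [← sum_filter_add_sum_filter_not univ p, sum_div, sum_div]
            congr 1 <;> refine sum_congr rfl fun i hi => ?_ <;>
              simp [a, (mem_filter.1 hi).2, mul_div_assoc]
        _ ≤ 1 := by
            rw [div_add_div _ _ (by positivity) two_ne_zero, div_le_one (by positivity)]
            nlinarith
    · ext i
      simp only [toLin'_apply, mulVec_diagonal]
      exact mul_div_cancel₀ _ (ha i).ne'
  have hdet : (diagonal a).det = 2 ^ d * r ^ (univ.filter p).card := by
    have hk : (univ.filter p).card + (univ.filter fun i => ¬ p i).card = d := by
      rw [card_filter_add_card_filter_not, card_univ, Fintype.card_fin]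
    rw [det_diagonal, prod_ite, prod_const, prod_const, mul_pow, mul_right_comm, ← pow_add, hk]
  calc volume {w ∈ weightedCorner c | ∃ j, ¬ p j ∧ δ < projNorm w j}
      ≤ volume (toLin' (diagonal a) '' weightedCorner c) := measure_mono hsub
    _ = _ := by
        rw [Measure.addHaar_image_linearMap, LinearMap.det_toLin', hdet, abs_of_pos (by positivity)]

theorem volume_sep_max_projNorm_gt_le {d : ℕ} (hd : 3 ≤ d) {c : Fin d → ℝ} (hc : ∀ i, 0 < c i)
    {ε N : ℝ} (hε : 0 < ε) (hε1 : ε < 1) (hN : 0 < N)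
    (hdom : ∀ i j : Fin d, (i : ℕ) < d - 2 → d - 2 ≤ (j : ℕ) → (N / ε ^ 2) * c i < c j) :
    volume {w ∈ weightedCorner c |
        ε / N < max (projNorm w ⟨d - 2, by omega⟩) (projNorm w ⟨d - 1, by omega⟩)} ≤
      ENNReal.ofReal (2 ^ d * ε) * volume (weightedCorner c) := by
  refine (measure_mono ?_).trans ((volume_sep_weightedCorner_le (fun i => (i : ℕ) < d - 2)
    hc hε (div_pos hε hN).le ?_).trans ?_)
  · rintro w ⟨hw, hmax⟩
    exact ⟨hw, (lt_max_iff.1 hmax).elim (fun h => ⟨_, show ¬ d - 2 < d - 2 by omega, h⟩)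
      (fun h => ⟨_, show ¬ d - 1 < d - 2 by omega, h⟩)⟩
  · intro i j hi hj
    have := hdom i j hi (by omega)
    rw [div_mul_eq_mul_div, div_lt_iff₀ (by positivity)] at this
    rw [show ε * (ε / N) * c j = c j * ε ^ 2 / N by ring, le_div_iff₀ hN]
    linarith
  · gcongr
    refine pow_le_of_le_one hε.le hε1.le (card_ne_zero.2 ⟨⟨0, by omega⟩, ?_⟩)
    simp only [mem_filter, mem_univ, true_and]
    omega

end WeightedCorner

section HausdorffEstimate

theorem simplexCone_sep_mapSimplex {d : ℕ} [NeZero d] {M : Matrix (Fin d) (Fin d) ℝ}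
    (hM : ∀ i j, 0 ≤ M i j) (hdet : M.det ≠ 0) (P : (Fin d → ℝ) → Prop) :
    simplexCone {y ∈ mapSimplex M | P (Rback M y)} =
      toLin' M '' {w ∈ weightedCorner (colSum M) | P (projNorm w)} := by
  ext z
  constructor
  · rintro ⟨hz, hz1, hy, hP⟩
    have hzy : M⁻¹ *ᵥ z = (∑ i, z i) • (M⁻¹ *ᵥ projNorm z) := by
      rw [mulVec_projNorm, smul_smul, mul_inv_cancel₀ hz.ne', one_smul]
    refine ⟨M⁻¹ *ᵥ z, ⟨⟨fun i => ?_, ?_⟩, ?_⟩, mulVec_inv_mulVec hdet z⟩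
    · rw [hzy]
      exact mul_pos hz (((mem_mapSimplex_iff hM hdet _).1 hy).2 i)
    · rwa [← sum_mulVec_eq_sum_colSum_mul, mulVec_inv_mulVec hdet]
    · rwa [Rback_projNorm hz.ne'] at hP
  · rintro ⟨w, ⟨⟨hw, hw1⟩, hP⟩, rfl⟩
    have hσ := sum_mulVec_pos hM hdet hw
    refine ⟨hσ, by rwa [toLin'_apply, sum_mulVec_eq_sum_colSum_mul],
      (mem_mapSimplex_iff hM hdet _).2 ⟨sum_projNorm hσ.ne', fun i => ?_⟩, ?_⟩
    · change 0 < (M⁻¹ *ᵥ projNorm (M *ᵥ w)) i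
      rw [mulVec_projNorm, inv_mulVec_mulVec hdet]
      exact mul_pos (inv_pos.2 hσ) (hw i)
    · change P (Rback M (projNorm (M *ᵥ w)))
      rwa [Rback_projNorm hσ.ne', Rback, inv_mulVec_mulVec hdet]

open NNReal

variable {m : ℕ} {M : Matrix (Fin (m + 1)) (Fin (m + 1)) ℝ}

theorem volume_preimage_simplexChart_sep_mapSimplex (hM : ∀ i j, 0 ≤ M i j) (hdet : M.det ≠ 0)
    {P : (Fin (m + 1) → ℝ) → Prop} (hP : MeasurableSet {v | P v}) :
    volume (simplexChart m ⁻¹' {y ∈ mapSimplex M | P (Rback M y)}) =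
      (m + 1) * ENNReal.ofReal |M.det| *
        volume {w ∈ weightedCorner (colSum M) | P (projNorm w)} := by
  have hS : MeasurableSet {y ∈ mapSimplex M | P (Rback M y)} :=
    (measurableSet_mapSimplex hM hdet).inter ((measurable_Rback M).comp (by fun_prop) hP)
  have hcone := volume_simplexCone hS
  rw [simplexCone_sep_mapSimplex hM hdet P, Measure.addHaar_image_linearMap,
    LinearMap.det_toLin'] at hcone
  rw [mul_assoc, hcone, ← mul_assoc, ENNReal.mul_inv_cancel (by simp) (by simp), one_mul]

theorem volume_preimage_simplexChart_mapSimplex (hM : ∀ i j, 0 ≤ M i j) (hdet : M.det ≠ 0) :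
    volume (simplexChart m ⁻¹' mapSimplex M) =
      (m + 1) * ENNReal.ofReal |M.det| * volume (weightedCorner (colSum M)) := by
  simpa using volume_preimage_simplexChart_sep_mapSimplex hM hdet (P := fun _ => True)
    MeasurableSet.univ

theorem hausdorffMeasure_sep_mapSimplex_le {K : ℝ≥0} (hK : LipschitzWith K (simplexChart m))
    (hM : ∀ i j, 0 ≤ M i j) (hdet : M.det ≠ 0) {P : (Fin (m + 1) → ℝ) → Prop}
    (hP : MeasurableSet {v | P v}) {a : ℝ≥0∞}
    (ha : volume {w ∈ weightedCorner (colSum M) | P (projNorm w)} ≤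
      a * volume (weightedCorner (colSum M))) :
    μH[m] {y ∈ mapSimplex M | P (Rback M y)} ≤ (K : ℝ≥0∞) ^ m * a * μH[m] (mapSimplex M) := by
  set J := (m + 1 : ℝ≥0∞) * ENNReal.ofReal |M.det|
  calc μH[m] {y ∈ mapSimplex M | P (Rback M y)}
      ≤ (K : ℝ≥0∞) ^ m * volume (simplexChart m ⁻¹' {y ∈ mapSimplex M | P (Rback M y)}) :=
        hausdorffMeasure_le_volume_preimage_simplexChart hK
          fun y hy => ((mem_mapSimplex_iff hM hdet y).1 hy.1).1
    _ = (K : ℝ≥0∞) ^ m * (J * volume {w ∈ weightedCorner (colSum M) | P (projNorm w)}) := by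
        rw [volume_preimage_simplexChart_sep_mapSimplex hM hdet hP]
    _ ≤ (K : ℝ≥0∞) ^ m * (J * (a * volume (weightedCorner (colSum M)))) := by gcongr
    _ = (K : ℝ≥0∞) ^ m * a * volume (simplexChart m ⁻¹' mapSimplex M) := by
        rw [volume_preimage_simplexChart_mapSimplex hM hdet]
        ring
    _ ≤ (K : ℝ≥0∞) ^ m * a * μH[m] (mapSimplex M) := by
        gcongr
        exact volume_preimage_simplexChart_le _

theorem hausdorffMeasure_mapSimplex_pos (hM : ∀ i j, 0 ≤ M i j) (hdet : M.det ≠ 0) :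
    0 < μH[m] (mapSimplex M) := by
  refine lt_of_lt_of_le ?_ (volume_preimage_simplexChart_le _)
  rw [volume_preimage_simplexChart_mapSimplex hM hdet]
  refine ENNReal.mul_pos (mul_ne_zero ?_ ?_) (volume_weightedCorner_pos
    (colSum_pos hM hdet)).ne' <;> simp [hdet]

theorem hausdorffMeasure_mapSimplex_lt_top {K : ℝ≥0} (hK : LipschitzWith K (simplexChart m))
    (hM : ∀ i j, 0 ≤ M i j) (hdet : M.det ≠ 0) : μH[m] (mapSimplex M) < ⊤ :=
  (hausdorffMeasure_le_volume_preimage_simplexChart hK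
    fun y hy => ((mem_mapSimplex_iff hM hdet y).1 hy).1).trans_lt <|
    ENNReal.mul_lt_top (by simp) <|
      volume_preimage_simplexChart_lt_top fun _ hy => nonneg_of_mem_mapSimplex hM hy

end HausdorffEstimate

/-- **Points with large last two coordinates after `R^n` are rare.** For `d ≥ 4` and `ζ > 1`
there is `C'` such that for all `0 < ε < 1`, `N > 0` and any matrix `M = M(x,n)` of Rauzy
induction reaching `π_L`, satisfying the column-domination condition (2) and the balance
condition (3), the set of `y ∈ MΔ` with `max((R^n y)_{d-1}, (R^n y)_d) > ε/N` has
`λ_{d-1}`-measure less than `C' ε λ_{d-1}(MΔ)`. -/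
theorem stmt11 (d : ℕ) (hd : 4 ≤ d) (ζ : ℝ) :
    ∃ C' : ℝ, 0 < C' ∧
    ∀ ε N : ℝ, 0 < ε → ε < 1 → 0 < N →
    ∀ π : PermDatum d, π.Irreducible →
    ∀ x : EuclideanSpace ℝ (Fin d), x ∈ openSimplex d →
    ∀ (n : ℕ) (M : Matrix (Fin d) (Fin d) ℝ) (p : (Fin d → ℝ) × PermDatum d),
      rauzyMat x π n = some M → rauzyIter x π n = some p → p.2 = piL d →
      (∀ i j : Fin d, (i : ℕ) < d - 2 → d - 2 ≤ (j : ℕ) →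
        (N / ε ^ 2) * colSum M i < colSum M j) →
      (∀ j j' : Fin d, d - 2 ≤ (j : ℕ) → d - 2 ≤ (j' : ℕ) →
        colSum M j < ζ * colSum M j') →
      (∀ i i' : Fin d, (i : ℕ) < d - 2 → (i' : ℕ) < d - 2 →
        colSum M i < ζ * colSum M i') →
      μH[(d : ℝ) - 1] {y ∈ mapSimplex M |
          ε / N < max (Rback M y ⟨d - 2, by omega⟩) (Rback M y ⟨d - 1, by omega⟩)} <
        ENNReal.ofReal (C' * ε) * μH[(d : ℝ) - 1] (mapSimplex M) := by
  obtain ⟨m, rfl⟩ : ∃ m, d = m + 1 := ⟨d - 1, by omega⟩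
  obtain ⟨K, hK⟩ := lipschitzWith_simplexChart (m := m)
  refine ⟨(K : ℝ) ^ m * 2 ^ (m + 1) + 1, by positivity, ?_⟩
  intro ε N hε hε1 hN π _ x _ n M p hM _ _ hdom _ _
  have hnn := rauzyMat_nonneg hM
  have hdet : M.det ≠ 0 := by simp [det_rauzyMat hM]
  rw [show ((m + 1 : ℕ) : ℝ) - 1 = m by push_cast; ring]
  let P : (Fin (m + 1) → ℝ) → Prop := fun v =>
    ε / N < max (v ⟨m + 1 - 2, by omega⟩) (v ⟨m + 1 - 1, by omega⟩)
  have hcorner := volume_sep_max_projNorm_gt_le (by omega) (colSum_pos hnn hdet) hε hε1 hN hdom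
  have hP : MeasurableSet {v | P v} := measurableSet_lt measurable_const (by fun_prop)
  refine (hausdorffMeasure_sep_mapSimplex_le hK hnn hdet hP hcorner).trans_lt
    ((ENNReal.mul_lt_mul_iff_left (hausdorffMeasure_mapSimplex_pos hnn hdet).ne'
      (hausdorffMeasure_mapSimplex_lt_top hK hnn hdet).ne).2 ?_)
  rw [← ENNReal.ofReal_coe_nnreal, ← ENNReal.ofReal_pow K.coe_nonneg, ← ENNReal.ofReal_mul
    (by positivity), ENNReal.ofReal_lt_ofReal_iff (by positivity)]
  nlinarith
end

section
/- Let d ≥ 3, let M be a d×d real matrix with nonnegative entries, and let B be a d×d real matrix with nonnegative entries such that for each j ≤ d−2 the j-th column of B equals e_j plus a nonnegative linear combination of e_{d−1} and e_d, and for j ∈ {d−1, d} the j-th column of B is a nonnegative linear combination of e_{d−1} and e_d. Then for every i ≤ d−2, the convex cone generated by the columns C_j(MB) with j ≠ i is contained in the convex cone generated by the columns C_j(M) with j ≠ i; in particular F_i(MB) ⊆ F_i(M), where F_i(M) = {Σ_{j≠i} a_j C_j(M) : a_j ≥ 0} ∩ Δ̄. -/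
open MeasureTheory

/-- The closed standard simplex in ℝ^d. -/
def closedSimplex (d : ℕ) : Set (EuclideanSpace ℝ (Fin d)) :=
  {x | (∀ i, 0 ≤ x i) ∧ ∑ i, x i = 1}

/-- The convex cone generated by the columns `C_j(M)` with `j ≠ i`. -/
def coneOmit (d : ℕ) (M : Matrix (Fin d) (Fin d) ℝ) (i : Fin d) : Set (Fin d → ℝ) :=
  {v | ∃ a : Fin d → ℝ, (∀ j, 0 ≤ a j) ∧ a i = 0 ∧ v = M.mulVec a}

/-- The face `F_i(M) = {Σ_{j≠i} a_j C_j(M) : a_j ≥ 0} ∩ Δ̄`. -/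
def Fface (d : ℕ) (M : Matrix (Fin d) (Fin d) ℝ) (i : Fin d) :
    Set (EuclideanSpace ℝ (Fin d)) :=
  {y | (y : Fin d → ℝ) ∈ coneOmit d M i} ∩ closedSimplex d

/-- **Faces are preserved by right-hand-side matrices.** If `B` has nonnegative entries, its
`j`-th column equal to `e_j` plus a nonnegative combination of `e_{d-1}, e_d` for `j ≤ d-2`,
and a nonnegative combination of `e_{d-1}, e_d` for `j ∈ {d-1,d}`, then for each `i ≤ d-2`
the cone generated by the columns of `MB` other than the `i`-th is contained in the
corresponding cone for `M`; in particular `F_i(MB) ⊆ F_i(M)`. -/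
theorem stmt14 (d : ℕ) (hd : 3 ≤ d) (M B : Matrix (Fin d) (Fin d) ℝ)
    (hM : ∀ i j, 0 ≤ M i j) (hB : ∀ i j, 0 ≤ B i j)
    (hBlhs : ∀ j : Fin d, (j : ℕ) < d - 2 → ∃ a b : ℝ, 0 ≤ a ∧ 0 ≤ b ∧
      ∀ i : Fin d, B i j = (if i = j then 1 else 0) + (if (i : ℕ) = d - 2 then a else 0)
        + (if (i : ℕ) = d - 1 then b else 0))
    (hBrhs : ∀ j : Fin d, d - 2 ≤ (j : ℕ) → ∃ a b : ℝ, 0 ≤ a ∧ 0 ≤ b ∧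
      ∀ i : Fin d, B i j = (if (i : ℕ) = d - 2 then a else 0)
        + (if (i : ℕ) = d - 1 then b else 0)) :
    ∀ i : Fin d, (i : ℕ) < d - 2 →
      coneOmit d (M * B) i ⊆ coneOmit d M i ∧ Fface d (M * B) i ⊆ Fface d M i := by
  intro i hi
  have hcone : coneOmit d (M * B) i ⊆ coneOmit d M i := by
    rintro v ⟨a, ha, hai, rfl⟩
    refine ⟨B.mulVec a, ?_, ?_, ?_⟩
    · intro j
      simp only [Matrix.mulVec, dotProduct]
      exact Finset.sum_nonneg fun k _ => mul_nonneg (hB j k) (ha k)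
    · have hi1 : (i : ℕ) ≠ d - 2 := Nat.ne_of_lt hi
      have hi2 : (i : ℕ) ≠ d - 1 := by omega
      have : ∀ j, B i j * a j = 0 := by
        intro j
        rcases lt_or_ge (j : ℕ) (d - 2) with hj | hj
        · obtain ⟨x, y, _, _, hcol⟩ := hBlhs j hj
          rw [hcol i, if_neg hi1, if_neg hi2]
          by_cases h : i = j
          · subst h; rw [hai, mul_zero]
          · rw [if_neg h]; ring
        · obtain ⟨x, y, _, _, hcol⟩ := hBrhs j hj
          rw [hcol i, if_neg hi1, if_neg hi2]; ring
      simp only [Matrix.mulVec, dotProduct]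
      exact Finset.sum_eq_zero fun j _ => this j
    · rw [Matrix.mulVec_mulVec]
  refine ⟨hcone, ?_⟩
  rintro y ⟨hy, hy2⟩
  exact ⟨hcone hy, hy2⟩
end

section
/- For every d ≥ 2 there exists ε₀ > 0 with the following property. Let Δ̄ = {x ∈ ℝ^d : x_i ≥ 0 for all i and Σ_{i=1}^d x_i = 1} and let H ⊂ ℝ^d be an affine hyperplane with Δ̄ ⊄ H. If H ∩ Δ̄ ∩ B(e₁, 1/2) ≠ ∅, then there exists j ∈ {2,…,d} such that H ∩ Δ̄ ∩ B(e_j, ε₀) = ∅. -/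
open MeasureTheory

lemma coord_le_dist {d : ℕ} (x y : EuclideanSpace ℝ (Fin d)) (j : Fin d) :
    |x j - y j| ≤ dist x y := by
  rw [EuclideanSpace.dist_eq]
  have h1 : |x j - y j| = Real.sqrt ((x j - y j) ^ 2) := by
    rw [Real.sqrt_sq_eq_abs]
  rw [h1]
  apply Real.sqrt_le_sqrt
  have h2 : (x j - y j) ^ 2 = dist (x j) (y j) ^ 2 := by
    rw [Real.dist_eq, sq_abs]
  rw [h2]
  exact Finset.single_le_sum (f := fun i => dist (x i) (y i) ^ 2)
    (fun i _ => sq_nonneg _) (Finset.mem_univ j)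

/-- If `x` is in the simplex, `∑ c i * x i = 0`, `x j ≥ t > 0`, and `|c i| ≤ K` for `i ≠ j`,
then `|c j| * t ≤ K * (1 - t)`. -/
lemma key_bound {d : ℕ} (c : Fin d → ℝ) (x : EuclideanSpace ℝ (Fin d)) (j : Fin d)
    (hx : (∀ i, 0 ≤ x i) ∧ ∑ i, x i = 1) (hz : ∑ i, c i * x i = 0)
    (t K : ℝ) (ht : t ≤ x j) (hK : 0 ≤ K) (hci : ∀ i, i ≠ j → |c i| ≤ K) :
    |c j| * t ≤ K * (1 - t) := by
  have hsplit : c j * x j + ∑ i ∈ Finset.univ.erase j, c i * x i = 0 := by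
    have := Finset.add_sum_erase Finset.univ (fun i => c i * x i) (Finset.mem_univ j)
    simp only at this
    linarith
  have hsum : ∑ i ∈ Finset.univ.erase j, x i = 1 - x j := by
    have := Finset.sum_erase_add Finset.univ x (Finset.mem_univ j)
    rw [hx.2] at this; linarith
  have h1 : |c j| * x j = |∑ i ∈ Finset.univ.erase j, c i * x i| := by
    have h : c j * x j = -(∑ i ∈ Finset.univ.erase j, c i * x i) := by linarith
    calc |c j| * x j = |c j * x j| := by rw [abs_mul, abs_of_nonneg (hx.1 j)]
      _ = |∑ i ∈ Finset.univ.erase j, c i * x i| := by rw [h, abs_neg]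
  have h2 : |∑ i ∈ Finset.univ.erase j, c i * x i| ≤ K * (1 - x j) := by
    calc |∑ i ∈ Finset.univ.erase j, c i * x i|
        ≤ ∑ i ∈ Finset.univ.erase j, |c i * x i| := Finset.abs_sum_le_sum_abs _ _
      _ ≤ ∑ i ∈ Finset.univ.erase j, K * x i := by
          apply Finset.sum_le_sum
          intro i hi
          rw [abs_mul, abs_of_nonneg (hx.1 i)]
          exact mul_le_mul_of_nonneg_right (hci i (Finset.ne_of_mem_erase hi)) (hx.1 i)
      _ = K * (1 - x j) := by rw [← Finset.mul_sum, hsum]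
  have h3 : |c j| * t ≤ |c j| * x j := mul_le_mul_of_nonneg_left ht (abs_nonneg _)
  have h4 : K * (1 - x j) ≤ K * (1 - t) := by
    apply mul_le_mul_of_nonneg_left _ hK; linarith
  linarith [h1 ▸ h2]

/-- **Hyperplanes near a vertex miss another vertex.** There is `ε₀ > 0`, depending only on `d`,
such that any affine hyperplane `H = {x : a·x = b}` not containing the whole closed simplex that
meets the simplex within distance `1/2` of the vertex `e₁` must miss the `ε₀`-ball about some
other vertex `e_j`. -/
theorem stmt15 (d : ℕ) (hd : 2 ≤ d) :
    ∃ ε₀ : ℝ, 0 < ε₀ ∧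
      ∀ (a : EuclideanSpace ℝ (Fin d)) (b : ℝ), a ≠ 0 →
        ¬ (closedSimplex d ⊆ {x | ∑ i, a i * x i = b}) →
        ({x | ∑ i, a i * x i = b} ∩ closedSimplex d ∩
          Metric.ball (EuclideanSpace.single (⟨0, by omega⟩ : Fin d) (1 : ℝ)) (1/2)).Nonempty →
        ∃ j : Fin d, j ≠ ⟨0, by omega⟩ ∧
          {x | ∑ i, a i * x i = b} ∩ closedSimplex d ∩
            Metric.ball (EuclideanSpace.single j (1 : ℝ)) ε₀ = ∅ := by
  refine ⟨1/4, by norm_num, ?_⟩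
  intro a b ha hsub hmeet
  by_contra hcon
  push_neg at hcon
  set z : Fin d := ⟨0, by omega⟩ with hzdef
  haveI : Nonempty (Fin d) := ⟨z⟩
  set c : Fin d → ℝ := fun i => a i - b with hc
  -- On the simplex, a·x - b = c·x
  have key : ∀ x ∈ closedSimplex d, (∑ i, a i * x i) - b = ∑ i, c i * x i := by
    intro x hx
    have h2 : (∑ i, x i) = 1 := hx.2
    simp only [hc, sub_mul, Finset.sum_sub_distrib, ← Finset.mul_sum, h2, mul_one]
  -- coordinate bound from ball membership
  have coord : ∀ (j : Fin d) (ε : ℝ) (x : EuclideanSpace ℝ (Fin d)),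
      x ∈ Metric.ball (EuclideanSpace.single j (1 : ℝ)) ε → 1 - ε < x j := by
    intro j ε x hx
    rw [Metric.mem_ball] at hx
    have h1 : EuclideanSpace.single j (1 : ℝ) j = 1 := by
      simp [EuclideanSpace.single_apply]
    have h2 := coord_le_dist x (EuclideanSpace.single j (1 : ℝ)) j
    rw [h1] at h2
    have h3 := abs_lt.mp (lt_of_le_of_lt h2 hx)
    linarith [h3.1]
  set C : ℝ := Finset.univ.sup' Finset.univ_nonempty (fun i => |c i|) with hC
  have hCle : ∀ i, |c i| ≤ C := fun i =>
    Finset.le_sup' (fun i => |c i|) (Finset.mem_univ i)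
  have hC0 : 0 ≤ C := le_trans (abs_nonneg _) (hCle z)
  -- each non-zero coordinate: |c j| ≤ C/3
  have hj3 : ∀ j : Fin d, j ≠ z → |c j| ≤ C / 3 := by
    intro j hj
    obtain ⟨q, hq⟩ := hcon j hj
    obtain ⟨⟨hqH, hqS⟩, hqB⟩ := hq
    have hqz : ∑ i, c i * q i = 0 := by
      have := key q hqS; rw [Set.mem_setOf_eq.mp hqH] at this; linarith
    have hqj : (3:ℝ)/4 ≤ q j := by have := coord j (1/4) q hqB; linarith
    have := key_bound c q j hqS hqz (3/4) C hqj hC0 (fun i _ => hCle i)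
    linarith
  -- the zero coordinate
  have hj0 : |c z| ≤ C / 3 := by
    obtain ⟨p, hp⟩ := hmeet
    obtain ⟨⟨hpH, hpS⟩, hpB⟩ := hp
    have hpz : ∑ i, c i * p i = 0 := by
      have := key p hpS; rw [Set.mem_setOf_eq.mp hpH] at this; linarith
    have hpj : (1:ℝ)/2 ≤ p z := by have := coord z (1/2) p hpB; linarith
    have := key_bound c p z hpS hpz (1/2) (C/3) hpj (by linarith)
      (fun i hi => hj3 i hi)
    linarith
  -- conclude C = 0
  have hCC : C ≤ C / 3 := by
    rw [hC]
    apply Finset.sup'_le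
    intro i _
    by_cases h : i = z
    · rw [h]; exact hj0
    · exact hj3 i h
  have hCzero : C = 0 := by linarith
  -- simplex ⊆ H
  apply hsub
  intro x hx
  have : ∀ i, c i = 0 := by
    intro i
    have := hCle i
    rw [hCzero] at this
    exact abs_eq_zero.mp (le_antisymm this (abs_nonneg _))
  have hk := key x hx
  simp only [this, zero_mul, Finset.sum_const_zero] at hk
  exact Set.mem_setOf_eq ▸ (by linarith : ∑ i, a i * x i = b)
end

section
/- Let k ≥ 3, let D ⊂ ℝ^k be compact and convex, let W ⊂ ℝ^k be a 2-dimensional linear subspace and E = W^⊥. For e ∈ E set f(e) = μH²((e + W) ∩ D), let ℰ = {e ∈ E : (e + W) ∩ D ≠ ∅}, and let A = sup_{e ∈ ℰ} f(e); assume A > 0. Then there exists a constant C, depending only on k, such that for every ε > 0, μH^{k−2}({e ∈ ℰ : f(e) < ε A}) ≤ C √ε · μH^{k−2}(ℰ). -/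
/-!
Pick a parameter `x₀ ∈ ℰ` whose slice has area more than `A / 2`. For `0 < t ≤ 1` and `e ∈ ℰ`,
convexity of `D` shows that the slice at `(1 - t) e + t x₀` contains a translate of `t` times the
slice at `x₀`, so its area is more than `t² A / 2`. For `t = √(2ε)` the image of `ℰ` under the
homothety of centre `x₀` and ratio `1 - t` thus avoids all slices of area `< ε A`. This image lies
in the convex set `ℰ` and has measure `(1 - t)^(k-2) μ(ℰ)`, so by Bernoulli's inequality the small
slices have measure at most `(1 - (1 - t)^(k-2)) μ(ℰ) ≤ (k - 2) t μ(ℰ) ≤ 2k √ε μ(ℰ)`.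
-/

open MeasureTheory ENNReal

/-- The affine plane through `e` parallel to the 2-dimensional subspace `W`. -/
def planeThrough {k : ℕ} (W : Submodule ℝ (EuclideanSpace ℝ (Fin k)))
    (e : EuclideanSpace ℝ (Fin k)) : Set (EuclideanSpace ℝ (Fin k)) :=
  {x | x - e ∈ W}

open scoped Pointwise
open AffineMap (homothety)

theorem Convex.homothety_image_subset {E : Type*} [AddCommGroup E] [Module ℝ E] {s : Set E}
    (hs : Convex ℝ s) {x : E} (hx : x ∈ s) {c : ℝ} (hc₀ : 0 ≤ c) (hc₁ : c ≤ 1) :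
    homothety x c '' s ⊆ s := by
  rintro _ ⟨y, hy, rfl⟩
  rw [AffineMap.homothety_eq_lineMap]
  exact hs.lineMap_mem hx hy ⟨hc₀, hc₁⟩

section Homothety

variable {E : Type*} [NormedAddCommGroup E] [NormedSpace ℝ E] [MeasurableSpace E] [BorelSpace E]

theorem hausdorffMeasure_homothety_image_of_pos {d : ℝ} (hd : 0 ≤ d) (x : E) {c : ℝ}
    (hc : 0 < c) (s : Set E) :
    μH[d] (homothety x c '' s) = ENNReal.ofReal (c ^ d) * μH[d] s := by
  rw [hausdorffMeasure_homothety_image hd x hc.ne', ENNReal.smul_def, smul_eq_mul,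
    ENNReal.coe_rpow_of_nonneg _ hd, ← enorm_eq_nnnorm, Real.enorm_eq_ofReal hc.le,
    ENNReal.ofReal_rpow_of_nonneg hc.le hd]

theorem hausdorffMeasure_le_of_disjoint_homothety_image {d : ℝ} (hd : 1 ≤ d) {s B : Set E}
    (hs : IsCompact s) (hconv : Convex ℝ s) {x : E} (hx : x ∈ s) {t : ℝ} (ht₀ : 0 < t)
    (ht₁ : t < 1) (hBs : B ⊆ s) (hB : Disjoint B (homothety x (1 - t) '' s)) :
    μH[d] B ≤ ENNReal.ofReal (d * t) * μH[d] s := by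
  by_cases hfin : μH[d] s = ∞
  · rw [hfin, ENNReal.mul_top (by simp only [ne_eq, ofReal_eq_zero, not_le]; positivity)]
    exact le_top
  set K := homothety x (1 - t) '' s
  have hK : μH[d] K = ENNReal.ofReal ((1 - t) ^ d) * μH[d] s :=
    hausdorffMeasure_homothety_image_of_pos (by linarith) x (by linarith) s
  have hsum : μH[d] B + μH[d] K ≤ μH[d] s := by
    rw [← measure_union hB (hs.image (AffineMap.homothety_continuous x _)).isClosed.measurableSet]
    exact measure_mono (Set.union_subset hBs
      (hconv.homothety_image_subset hx (by linarith) (by linarith)))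
  have hbernoulli : 1 ≤ d * t + (1 - t) ^ d := by
    have := one_add_mul_self_le_rpow_one_add (s := -t) (by linarith) hd
    rw [← sub_eq_add_neg] at this
    linarith
  have hcover : μH[d] s ≤ ENNReal.ofReal (d * t) * μH[d] s + μH[d] K := by
    rw [hK, ← add_mul, ← ENNReal.ofReal_add (by positivity) (by positivity)]
    exact le_mul_of_one_le_left' (ENNReal.one_le_ofReal.2 hbernoulli)
  exact (ENNReal.add_le_add_iff_right (hK ▸ mul_ne_top ofReal_ne_top hfin)).1 (hsum.trans hcover)

end Homothety

theorem IsCompact.hausdorffMeasure_finrank_lt_top {E : Type*} [NormedAddCommGroup E]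
    [InnerProductSpace ℝ E] [MeasurableSpace E] [BorelSpace E] {K : Submodule ℝ E}
    [FiniteDimensional ℝ K] {s : Set E} (hs : IsCompact s) (hsK : s ⊆ K) :
    μH[Module.finrank ℝ K] s < ∞ := by
  obtain ⟨t, rfl⟩ : ∃ t : Set K, (↑) '' t = s :=
    ⟨(↑) ⁻¹' s, Set.image_preimage_eq_of_subset (by simpa using hsK)⟩
  rw [isometry_subtype_coe.hausdorffMeasure_image (Or.inl (Nat.cast_nonneg _))]
  exact (isometry_subtype_coe.isEmbedding.isInducing.isCompact_iff.2 hs).measure_lt_top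

section Slices

variable {k : ℕ} (W : Submodule ℝ (EuclideanSpace ℝ (Fin k)))
  (D : Set (EuclideanSpace ℝ (Fin k)))

def sliceParams : Set (EuclideanSpace ℝ (Fin k)) :=
  {e | e ∈ Wᗮ ∧ (planeThrough W e ∩ D).Nonempty}

noncomputable def sliceArea (e : EuclideanSpace ℝ (Fin k)) : ℝ≥0∞ :=
  μH[2] (planeThrough W e ∩ D)

theorem sliceParams_eq_image : sliceParams W D = Wᗮ.starProjection '' D := by
  ext e
  constructor
  · rintro ⟨he, x, hxW, hxD⟩
    exact ⟨x, hxD, Submodule.eq_starProjection_of_mem_orthogonal' he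
      (W.le_orthogonal_orthogonal hxW) (by abel)⟩
  · rintro ⟨x, hxD, rfl⟩
    refine ⟨Submodule.starProjection_apply_mem _ x, x, ?_, hxD⟩
    show x - Wᗮ.starProjection x ∈ W
    simp

variable {D}

theorem IsCompact.sliceParams (hD : IsCompact D) : IsCompact (sliceParams W D) :=
  sliceParams_eq_image W D ▸ hD.image Wᗮ.starProjection.continuous

theorem Convex.sliceParams (hD : Convex ℝ D) : Convex ℝ (sliceParams W D) :=
  sliceParams_eq_image W D ▸ hD.linear_image Wᗮ.starProjection.toLinearMap

theorem planeThrough_inter_subset_vadd_starProjection_image {e : EuclideanSpace ℝ (Fin k)}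
    (he : e ∈ Wᗮ) : planeThrough W e ∩ D ⊆ e +ᵥ W.starProjection '' D := by
  rintro x ⟨hxW, hxD⟩
  refine ⟨W.starProjection x, ⟨x, hxD, rfl⟩, ?_⟩
  change e + _ = x
  rw [Submodule.eq_starProjection_of_mem_orthogonal' hxW he (sub_add_cancel x e).symm,
    add_sub_cancel]

theorem iSup_sliceArea_ne_top (hW : Module.finrank ℝ W = 2) (hD : IsCompact D) :
    ⨆ e ∈ sliceParams W D, sliceArea W D e ≠ ∞ := by
  have hfin : μH[2] (W.starProjection '' D) < ∞ := by
    simpa [hW] using (hD.image W.starProjection.continuous).hausdorffMeasure_finrank_lt_top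
      (K := W) (by rintro _ ⟨x, -, rfl⟩; exact W.starProjection_apply_mem x)
  refine ne_top_of_le_ne_top hfin.ne (iSup₂_le fun e he => ?_)
  calc sliceArea W D e ≤ μH[2] (e +ᵥ W.starProjection '' D) :=
        measure_mono (planeThrough_inter_subset_vadd_starProjection_image W he.1)
    _ = μH[2] (W.starProjection '' D) := measure_vadd _ _ _

theorem homothety_mem_planeThrough {a b e x : EuclideanSpace ℝ (Fin k)}
    (ha : a ∈ planeThrough W e) (hb : b ∈ planeThrough W x) (t : ℝ) :
    homothety a t b ∈ planeThrough W (homothety x (1 - t) e) := by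
  have hdiff : homothety a t b - homothety x (1 - t) e = t • (b - x) + (1 - t) • (a - e) := by
    simp only [AffineMap.homothety_apply, vsub_eq_sub, vadd_eq_add]
    module
  show _ - _ ∈ W
  rw [hdiff]
  exact W.add_mem (W.smul_mem t hb) (W.smul_mem _ ha)

theorem ofReal_sq_mul_sliceArea_le (hD : Convex ℝ D) {e x : EuclideanSpace ℝ (Fin k)}
    (he : (planeThrough W e ∩ D).Nonempty) {t : ℝ} (ht₀ : 0 < t) (ht₁ : t ≤ 1) :
    ENNReal.ofReal (t ^ 2) * sliceArea W D x ≤ sliceArea W D (homothety x (1 - t) e) := by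
  obtain ⟨a, haW, haD⟩ := he
  have hsub : homothety a t '' (planeThrough W x ∩ D) ⊆
      planeThrough W (homothety x (1 - t) e) ∩ D := by
    rintro _ ⟨b, ⟨hbW, hbD⟩, rfl⟩
    exact ⟨homothety_mem_planeThrough W haW hbW t,
      hD.homothety_image_subset haD ht₀.le ht₁ ⟨b, hbD, rfl⟩⟩
  calc ENNReal.ofReal (t ^ 2) * sliceArea W D x
      = μH[2] (homothety a t '' (planeThrough W x ∩ D)) := by
        rw [hausdorffMeasure_homothety_image_of_pos zero_le_two a ht₀, Real.rpow_two]; rfl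
    _ ≤ _ := measure_mono hsub

theorem disjoint_setOf_sliceArea_lt_homothety_image (hD : Convex ℝ D)
    (x : EuclideanSpace ℝ (Fin k)) {t : ℝ} (ht₀ : 0 < t) (ht₁ : t ≤ 1) :
    Disjoint {e | sliceArea W D e < ENNReal.ofReal (t ^ 2) * sliceArea W D x}
      (homothety x (1 - t) '' sliceParams W D) := by
  refine Set.disjoint_left.2 ?_
  rintro _ hlt ⟨e, he, rfl⟩
  exact (ofReal_sq_mul_sliceArea_le W hD he.2 ht₀ ht₁).not_gt hlt

end Slices

/-- **Small-area slices are rare.** There is a constant `C = C(k)` such that for every compact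
convex `D ⊂ ℝ^k`, every 2-dimensional subspace `W` with parameter space `E = Wᗮ`,
`ℰ = {e ∈ E : (e+W) ∩ D ≠ ∅}`, and `A = sup_{e ∈ ℰ} μH²((e+W) ∩ D) > 0`, one has, for every
`ε > 0`, `μH^{k-2}({e ∈ ℰ : μH²((e+W) ∩ D) < ε A}) ≤ C √ε · μH^{k-2}(ℰ)`. -/
theorem stmt18 (k : ℕ) (hk : 3 ≤ k) :
    ∃ C : ℝ, 0 < C ∧
      ∀ (D : Set (EuclideanSpace ℝ (Fin k))), IsCompact D → Convex ℝ D →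
      ∀ (W : Submodule ℝ (EuclideanSpace ℝ (Fin k))), Module.finrank ℝ W = 2 →
      ∀ (𝓔 : Set (EuclideanSpace ℝ (Fin k))),
        𝓔 = {e | e ∈ Wᗮ ∧ (planeThrough W e ∩ D).Nonempty} →
      ∀ (A : ℝ≥0∞), A = ⨆ e ∈ 𝓔, μH[2] (planeThrough W e ∩ D) → 0 < A →
      ∀ ε : ℝ, 0 < ε →
        μH[(k : ℝ) - 2] {e ∈ 𝓔 | μH[2] (planeThrough W e ∩ D) < ENNReal.ofReal ε * A} ≤
          ENNReal.ofReal (C * Real.sqrt ε) * μH[(k : ℝ) - 2] 𝓔 := by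
  refine ⟨2 * k, by positivity, ?_⟩
  intro D hDc hDconv W hW2 𝓔 h𝓔 A hA hA0 ε hε
  change 𝓔 = sliceParams W D at h𝓔
  subst h𝓔
  change A = ⨆ e ∈ sliceParams W D, sliceArea W D e at hA
  change μH[_] {e ∈ sliceParams W D | sliceArea W D e < _} ≤ _
  by_cases hlarge : 1 ≤ 2 * k * √ε
  · exact (measure_mono fun e he => he.1).trans (le_mul_of_one_le_left' (one_le_ofReal.2 hlarge))
  set t := √(2 * ε)
  have ht₀ : 0 < t := by positivity
  have ht_sq : t ^ 2 = 2 * ε := Real.sq_sqrt (by positivity)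
  have ht_le : t ≤ 2 * √ε := by nlinarith [Real.sq_sqrt hε.le, Real.sqrt_nonneg ε]
  have hk_real : (3 : ℝ) ≤ k := by exact_mod_cast hk
  have ht₁ : t < 1 := by nlinarith [Real.sqrt_nonneg ε]
  obtain ⟨x₀, hx₀, hx₀A⟩ : ∃ x₀ ∈ sliceParams W D, A / 2 < sliceArea W D x₀ := by
    have hhalf := ENNReal.half_lt_self hA0.ne' (hA ▸ iSup_sliceArea_ne_top W hW2 hDc)
    simpa only [hA, lt_iSup_iff, exists_prop] using hhalf
  have hthreshold : ENNReal.ofReal ε * A ≤ ENNReal.ofReal (t ^ 2) * sliceArea W D x₀ :=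
    calc ENNReal.ofReal ε * A = ENNReal.ofReal (t ^ 2) * (A / 2) := by
          rw [ht_sq, ofReal_mul zero_le_two, ofReal_ofNat, mul_comm 2, mul_assoc,
            ENNReal.mul_div_cancel two_ne_zero ofNat_ne_top]
      _ ≤ ENNReal.ofReal (t ^ 2) * sliceArea W D x₀ := by gcongr
  calc _ ≤ ENNReal.ofReal (((k : ℝ) - 2) * t) * μH[(k : ℝ) - 2] (sliceParams W D) :=
        hausdorffMeasure_le_of_disjoint_homothety_image (by linarith) (hDc.sliceParams W)
          (hDconv.sliceParams W) hx₀ ht₀ ht₁ (fun e he => he.1)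
          ((disjoint_setOf_sliceArea_lt_homothety_image W hDconv x₀ ht₀ ht₁.le).mono_left
            fun e he => he.2.trans_le hthreshold)
    _ ≤ _ := by gcongr ENNReal.ofReal ?_ * _; nlinarith
end
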